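/- arXiv:1710.04787 — 13 statements merged into one kernel-verified Lean document; each statement's English description precedes it below -/
import Mathlib

section
/- Suppose G has a limiting sequence pair (F_n)_n, (k_n)_n and (g_n)_n is a sequence in G. Then there exists a sequence (m_n)_n of natural numbers such that for every l ∈ ℕ and every x ∈ G, if g_1(g_2(⋯g_{l-1}(g_l x^{m_l})^{m_{l-1}}⋯)^{m_2})^{m_1} ∈ F_l, then x = 1_G. -/
def IsLimitingSequencePair {G : Type*} [Group G] (F : ℕ → Set G) (k : ℕ → ℕ) : Prop :=
  Monotone F ∧
  (∀ (n : ℕ) (g : G), ∃ m : ℕ, (fun x => g * x) '' F n ⊆ F m) ∧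
  (∀ n : ℕ, {g : G | g ^ k n ∈ F n} = {1}) ∧
  (∀ m n : ℕ, m ≤ n → {g : G | g ^ k m ∈ F n} ⊆ F n)

/-- The nested expression `g 1 * (g 2 * ( ⋯ (g l * x ^ m l) ^ m (l-1) ⋯ ) ^ m 2) ^ m 1`. -/
def nestedWord {G : Type*} [Group G] (g : ℕ → G) (m : ℕ → ℕ) (x : G) (l : ℕ) : G :=
  (List.range' 1 l).foldr (fun i acc => g i * acc ^ m i) x

/-- Chain of indices: `chainF t l 0 = l`, and
`chainF t l (i+1) = max (t (i+1) (chainF t l i)) (t (i+1) (chainF t (i+1) i))` for `i+1 < l`. -/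
def chainF (t : ℕ → ℕ → ℕ) : ℕ → ℕ → ℕ
  | l, 0 => l
  | l, (i+1) =>
    if _h : i + 1 < l then
      max (t (i+1) (chainF t l i)) (t (i+1) (chainF t (i+1) i))
    else 0
termination_by l i => l + i
decreasing_by all_goals omega

/-- The index sequence used for the exponents. -/
def cF (t : ℕ → ℕ → ℕ) (l : ℕ) : ℕ := t l (chainF t l (l - 1))

theorem exists_exponents_of_limitingSequencePair
    {G : Type*} [Group G] (F : ℕ → Set G) (k : ℕ → ℕ)
    (h : IsLimitingSequencePair F k) (g : ℕ → G) :
    ∃ m : ℕ → ℕ, ∀ l : ℕ, 1 ≤ l → ∀ x : G, nestedWord g m x l ∈ F l → x = 1 := by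
  obtain ⟨hmono, htrans, hrad, hsub⟩ := h
  choose t ht using fun (i n : ℕ) => htrans n (g i)⁻¹
  refine ⟨fun n => k (cF t n), ?_⟩
  intro l hl x hx
  -- partial words
  set m : ℕ → ℕ := fun n => k (cF t n) with hm
  set P : ℕ → G := fun j => (List.range' j (l + 1 - j)).foldr (fun i acc => g i * acc ^ m i) x
    with hP
  have hPsucc : ∀ j, 1 ≤ j → j ≤ l → P j = g j * (P (j + 1)) ^ m j := by
    intro j h1 h2
    have e1 : l + 1 - j = (l - j) + 1 := by omega
    have e2 : l + 1 - (j + 1) = l - j := by omega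
    simp only [hP, e1, e2, List.range'_succ, List.foldr_cons]
  have hPl : P (l + 1) = x := by
    simp [hP, Nat.sub_self]
  have hP1 : P 1 = nestedWord g m x l := by
    simp [hP, nestedWord]
  -- key step lemma: from P (j) ∈ F n we get P (j+1) ^ m j ∈ F (t j n)
  have hstep : ∀ j n, 1 ≤ j → j ≤ l → P j ∈ F n → (P (j + 1)) ^ m j ∈ F (t j n) := by
    intro j n h1 h2 hmem
    apply ht j n
    refine ⟨P j, hmem, ?_⟩
    rw [hPsucc j h1 h2]
    group
  -- main induction
  have main : ∀ i, i ≤ l - 1 → P (i + 1) ∈ F (chainF t l i) := by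
    intro i
    induction i with
    | zero => intro _; rw [chainF, hP1]; exact hx
    | succ i ih =>
      intro hi
      have hil : i + 1 < l := by omega
      have hmem := ih (by omega)
      have h2 : (P (i + 2)) ^ m (i + 1) ∈ F (t (i + 1) (chainF t l i)) :=
        hstep (i + 1) (chainF t l i) (by omega) (by omega) hmem
      have hCh : chainF t l (i + 1)
          = max (t (i+1) (chainF t l i)) (t (i+1) (chainF t (i+1) i)) := by
        rw [chainF]; simp [hil]
      have h3 : (P (i + 2)) ^ k (cF t (i + 1)) ∈ F (chainF t l (i + 1)) := by
        have : (P (i + 2)) ^ m (i + 1) ∈ F (chainF t l (i + 1)) := by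
          apply hmono (le_of_le_of_eq (le_max_left _ _) hCh.symm) h2
        exact this
      have hle : cF t (i + 1) ≤ chainF t l (i + 1) := by
        rw [hCh]
        have : cF t (i + 1) = t (i + 1) (chainF t (i + 1) i) := by
          simp [cF]
        rw [this]
        exact le_max_right _ _
      exact hsub (cF t (i + 1)) (chainF t l (i + 1)) hle h3
  -- final step
  have hfin : P l ∈ F (chainF t l (l - 1)) := by
    have := main (l - 1) le_rfl
    have heq : l - 1 + 1 = l := by omega
    rwa [heq] at this
  have hx2 : x ^ k (cF t l) ∈ F (cF t l) := by
    have := hstep l (chainF t l (l - 1)) hl le_rfl hfin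
    rw [hPl] at this
    exact this
  have := hrad (cF t l)
  have : x ∈ ({1} : Set G) := by rw [← this]; exact hx2
  simpa using this
end

section
/- If G is a group equipped with a Dudley norm, then G has a limiting sequence pair, witnessed by F_n = {g ∈ G : l(g) ≤ n} and k_n = n+1. -/
/-- A group with a Dudley norm (an `ℕ`-valued length function `L` with
`L (g ^ n) ≥ max n (L g)` for `g ≠ 1` and `n ≥ 1`) has a limiting sequence pair,
witnessed by `F n = {g | L g ≤ n}` and `k n = n + 1`. -/
theorem limitingSequencePair_of_dudleyNorm
    {G : Type*} [Group G] (L : G → ℕ)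
    (hone : L 1 = 0)
    (hinv : ∀ g : G, L g⁻¹ = L g)
    (hmul : ∀ g h : G, L (g * h) ≤ L g + L h)
    (hdudley : ∀ g : G, g ≠ 1 → ∀ n : ℕ, 1 ≤ n → max n (L g) ≤ L (g ^ n)) :
    IsLimitingSequencePair (fun n => {g : G | L g ≤ n}) (fun n => n + 1) := by
  refine ⟨?_, ?_, ?_, ?_⟩
  · intro a b hab g hg
    exact le_trans hg hab
  · intro n g
    refine ⟨L g + n, ?_⟩
    rintro x ⟨y, hy, rfl⟩
    exact le_trans (hmul g y) (Nat.add_le_add_left hy _)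
  · intro n
    ext g
    simp only [Set.mem_setOf_eq, Set.mem_singleton_iff]
    constructor
    · intro h
      by_contra hg
      have := hdudley g hg (n + 1) (by omega)
      omega
    · rintro rfl
      simp [hone]
  · intro m n hmn g hg
    simp only [Set.mem_setOf_eq] at *
    by_cases h1 : g = 1
    · simp [h1, hone]
    · have := hdudley g h1 (m + 1) (by omega)
      omega
end

section
/- If G is a group with a uniformly monotone length function (with constant k), then G has a limiting sequence pair, witnessed by F_n = {g ∈ G : l(g) ≤ n} and k_n = k^n. -/
/-- A group with a uniformly monotone length function `l` (with constant `k`, i.e.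
`l (g ^ k) ≥ l g + 1` for all `g ≠ 1`) has a limiting sequence pair, witnessed by
`F n = {g | l g ≤ n}` and `k n = k ^ n`. -/
theorem limitingSequencePair_of_uniformlyMonotoneLength
    {G : Type*} [Group G] (l : G → ℝ)
    (hnonneg : ∀ g : G, 0 ≤ l g)
    (hone : l 1 = 0)
    (hinv : ∀ g : G, l g⁻¹ = l g)
    (hmul : ∀ g h : G, l (g * h) ≤ l g + l h)
    (k : ℕ)
    (hmono : ∀ g : G, g ≠ 1 → l g + 1 ≤ l (g ^ k)) :
    IsLimitingSequencePair (fun n => {g : G | l g ≤ (n : ℝ)}) (fun n => k ^ n) := by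
  -- subadditivity on powers
  have hpow : ∀ (g : G) (j : ℕ), l (g ^ j) ≤ j * l g := by
    intro g j
    induction j with
    | zero => simp [hone]
    | succ j ih =>
        have := hmul (g ^ j) g
        rw [pow_succ]
        push_cast
        nlinarith
  -- positivity of l on nontrivial elements
  have hpos : ∀ g : G, g ≠ 1 → 0 < l g := by
    intro g hg
    by_contra h
    have h0 : l g = 0 := le_antisymm (not_lt.mp h) (hnonneg g)
    have h1 := hmono g hg
    have h2 := hpow g k
    rw [h0] at h1 h2
    simp at h1 h2
    linarith
  have hne : ∀ g : G, g ≠ 1 → g ^ k ≠ 1 := by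
    intro g hg h
    have := hmono g hg
    rw [h, hone] at this
    have := hnonneg g
    linarith
  -- main growth estimate
  have hgrow : ∀ (g : G), g ≠ 1 → ∀ n : ℕ, l g + n ≤ l (g ^ k ^ n) := by
    intro g hg n
    induction n with
    | zero => simp
    | succ n ih =>
        have hne' : g ^ k ^ n ≠ 1 := by
          intro h
          have := hpos g hg
          rw [h, hone] at ih
          push_cast at ih
          linarith [Nat.cast_nonneg (α := ℝ) n]
        have := hmono (g ^ k ^ n) hne'
        rw [← pow_mul, ← pow_succ] at this
        push_cast
        linarith
  refine ⟨?_, ?_, ?_, ?_⟩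
  · intro a b hab g hg
    simp only [Set.mem_setOf_eq] at *
    exact hg.trans (by exact_mod_cast Nat.cast_le.mpr hab)
  · intro n g
    refine ⟨n + ⌈l g⌉₊, ?_⟩
    rintro x ⟨y, hy, rfl⟩
    simp only [Set.mem_setOf_eq] at *
    calc l (g * y) ≤ l g + l y := hmul g y
      _ ≤ ⌈l g⌉₊ + n := by
          have := Nat.le_ceil (l g)
          linarith
      _ = ((n + ⌈l g⌉₊ : ℕ) : ℝ) := by push_cast; ring
  · intro n
    ext g
    simp only [Set.mem_setOf_eq, Set.mem_singleton_iff]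
    constructor
    · intro h
      by_contra hg
      have h1 := hgrow g hg n
      have h2 := hpos g hg
      linarith
    · rintro rfl; simp [hone]
  · intro m n hmn g hg
    simp only [Set.mem_setOf_eq] at *
    by_cases h1 : g = 1
    · subst h1; simp [hone]
    · have := hgrow g h1 m
      have : l g ≤ l (g ^ k ^ m) := by
        have := Nat.cast_nonneg (α := ℝ) m
        linarith
      linarith
end

section
/- Every countable torsion-free group with finite roots has a limiting sequence pair. -/
/-- Every countable torsion-free group with finite roots has a limiting sequence pair. -/
theorem limitingSequencePair_of_countable_torsionFree_finiteRoots
    {G : Type*} [Group G] [Countable G]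
    (htf : ∀ g : G, ∀ n : ℕ, 1 ≤ n → g ^ n = 1 → g = 1)
    (hroots : ∀ g : G, {h : G | ∃ n : ℕ, 1 ≤ n ∧ h ^ n = g}.Finite) :
    ∃ (F : ℕ → Set G) (K : ℕ → ℕ), IsLimitingSequencePair F K := by
  classical
  obtain ⟨e, he⟩ := exists_surjective_nat G
  -- the roots operator
  set R : Set G → Set G := fun S => {h | ∃ g ∈ S, ∃ n, 1 ≤ n ∧ h ^ n = g} with hRdef
  have hRfin : ∀ S : Set G, S.Finite → (R S).Finite := by
    intro S hS
    have hsub : R S ⊆ ⋃ g ∈ S, {h : G | ∃ n, 1 ≤ n ∧ h ^ n = g} := by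
      rintro h ⟨g, hg, n, hn, hpow⟩
      exact Set.mem_biUnion hg ⟨n, hn, hpow⟩
    exact (hS.biUnion (fun g _ => hroots g)).subset hsub
  have hRsub : ∀ S : Set G, S ⊆ R S := fun S g hg => ⟨g, hg, 1, le_refl 1, pow_one g⟩
  have hRclosed : ∀ S : Set G, ∀ h g : G, g ∈ R S → (∃ n, 1 ≤ n ∧ h ^ n = g) → h ∈ R S := by
    rintro S h g ⟨g', hg', m, hm, hgm⟩ ⟨n, hn, hhn⟩
    refine ⟨g', hg', n * m, ?_, ?_⟩
    · exact Nat.one_le_iff_ne_zero.mpr (by positivity)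
    · rw [pow_mul, hhn, hgm]
  -- the sequence of sets
  let F : ℕ → Set G := fun n => Nat.rec (R {1}) (fun m Fm => R (insert (e m) Fm)) n
  have hF0 : F 0 = R {1} := rfl
  have hFs : ∀ n, F (n + 1) = R (insert (e n) (F n)) := fun n => rfl
  have hFfin : ∀ n, (F n).Finite := by
    intro n
    induction n with
    | zero => exact hRfin _ (Set.finite_singleton 1)
    | succ m ih => exact hRfin _ (ih.insert (e m))
  have hFone : ∀ n, (1 : G) ∈ F n := by
    intro n
    cases n with
    | zero => exact hRsub _ rfl
    | succ m =>
      rw [hFs]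
      exact hRsub _ (Set.mem_insert_iff.mpr (Or.inr (by
        induction m with
        | zero => exact hRsub _ rfl
        | succ k ih => exact hRsub _ (Set.mem_insert_iff.mpr (Or.inr ih)))))
  have hFmono : Monotone F := by
    apply monotone_nat_of_le_succ
    intro n x hx
    rw [hFs]
    exact hRsub _ (Set.mem_insert_iff.mpr (Or.inr hx))
  have hFclosed : ∀ n : ℕ, ∀ h g : G, g ∈ F n → (∃ m, 1 ≤ m ∧ h ^ m = g) → h ∈ F n := by
    intro n
    cases n with
    | zero => exact fun h g hg hr => hRclosed _ h g hg hr
    | succ m => exact fun h g hg hr => hRclosed _ h g hg hr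
  have hcover : ∀ g : G, ∃ m, g ∈ F m := by
    intro g
    obtain ⟨n, rfl⟩ := he g
    exact ⟨n + 1, by rw [hFs]; exact hRsub _ (Set.mem_insert _ _)⟩
  -- injectivity of powers of nontrivial elements
  have hinj : ∀ h : G, h ≠ 1 → ∀ a b : ℕ, h ^ a = h ^ b → a = b := by
    have key : ∀ h : G, h ≠ 1 → ∀ a b : ℕ, a ≤ b → h ^ a = h ^ b → a = b := by
      intro h h1 a b hab hpow
      by_contra hne
      have hlt : a < b := lt_of_le_of_ne hab hne
      have h2 : h ^ a * h ^ (b - a) = h ^ b := by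
        rw [← pow_add]; congr 1; omega
      have h3 : h ^ (b - a) = 1 := by
        rw [← hpow] at h2
        exact mul_left_cancel (by rw [h2, mul_one])
      exact h1 (htf h (b - a) (by omega) h3)
    intro h h1 a b hpow
    rcases le_total a b with hab | hab
    · exact key h h1 a b hab hpow
    · exact (key h h1 b a hab hpow.symm).symm
  -- choosing the exponents
  have hk : ∀ n : ℕ, ∃ k : ℕ, 1 ≤ k ∧ {g : G | g ^ k ∈ F n} = {1} := by
    intro n
    have hB : {k : ℕ | ∃ h ∈ F n, h ≠ 1 ∧ h ^ k ∈ F n}.Finite := by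
      have hsub : {k : ℕ | ∃ h ∈ F n, h ≠ 1 ∧ h ^ k ∈ F n} ⊆
          ⋃ h ∈ F n, ⋃ x ∈ F n, {k : ℕ | h ≠ 1 ∧ h ^ k = x} := by
        rintro k ⟨h, hh, h1, hpow⟩
        exact Set.mem_biUnion hh (Set.mem_biUnion hpow ⟨h1, rfl⟩)
      refine Set.Finite.subset ?_ hsub
      refine (hFfin n).biUnion fun h _ => (hFfin n).biUnion fun x _ => ?_
      apply Set.Subsingleton.finite
      rintro a ⟨ha1, ha2⟩ b ⟨hb1, hb2⟩
      exact hinj h ha1 a b (by rw [ha2, hb2])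
    have hfin : ({k : ℕ | ∃ h ∈ F n, h ≠ 1 ∧ h ^ k ∈ F n} ∪ {0}).Finite :=
      hB.union (Set.finite_singleton 0)
    obtain ⟨k, hkmem⟩ := hfin.infinite_compl.nonempty
    rw [Set.mem_compl_iff, Set.mem_union] at hkmem
    push_neg at hkmem
    obtain ⟨hknotB, hk0⟩ := hkmem
    refine ⟨k, Nat.one_le_iff_ne_zero.mpr hk0, ?_⟩
    ext g
    simp only [Set.mem_setOf_eq, Set.mem_singleton_iff]
    constructor
    · intro hg
      by_contra hg1
      have hgF : g ∈ F n := hFclosed n g (g ^ k) hg ⟨k, Nat.one_le_iff_ne_zero.mpr hk0, rfl⟩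
      exact hknotB ⟨g, hgF, hg1, hg⟩
    · rintro rfl
      simpa using hFone n
  choose K hK1 hK2 using hk
  refine ⟨F, K, hFmono, ?_, hK2, ?_⟩
  · -- translation condition
    intro n g
    have hfin : ((fun x => g * x) '' F n).Finite := (hFfin n).image _
    choose idx hidx using hcover
    refine ⟨hfin.toFinset.sup idx, ?_⟩
    intro y hy
    have hy' : y ∈ hfin.toFinset := hfin.mem_toFinset.mpr hy
    exact hFmono (Finset.le_sup hy') (hidx y)
  · -- root-closedness condition
    intro m n _ g hg
    exact hFclosed n g (g ^ K m) hg ⟨K m, hK1 m, rfl⟩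
end

section
/- If A is an abelian group with cardinality strictly less than 2^{ℵ₀} that contains no element of finite order other than the identity and is reduced (i.e., ⋂_{m∈ℕ} mA = {0}), then every group homomorphism from a completely metrizable topological group H to A has open kernel. -/
/-!
Let `C` be the set of values that `φ` takes arbitrarily close to `1`. By completeness, products
`y n = z n * y (n + 1) ^ (n + 1)` of small enough `z n` converge; taking `φ (z n) ∈ C` shows that
every `c ∈ C` can be multiplied by the profinite integers `Ẑ = lim ℤ/n!ℤ`. On the `p`-adic part
this multiplication is not injective, as `#A < 2 ^ ℵ₀`; its kernel is an ideal, saturated since `A`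
is torsion-free, so it contains the `p`-adic idempotent, and then `p ^ k` divides `c` for all `k`.
As `A` is reduced, `C = {0}`. If the kernel were not open, one could then choose small `z n` with
`φ (z n) ≠ 0` such that the infinite products of the subfamilies of `(z n)` have pairwise distinct
images under `φ`, again contradicting `#A < 2 ^ ℵ₀`.
-/

open Filter Topology

theorem not_injective_of_mk_lt_continuum {A : Type*} (hcard : Cardinal.mk A < 2 ^ Cardinal.aleph0)
    (g : (ℕ → Bool) → A) : ¬ Function.Injective g := fun hg => by
  have := Cardinal.lift_mk_le_lift_mk_of_injective hg
  simp at this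
  exact this.not_gt hcard

theorem exists_seq_forall_of_local {X : Type*} [Nonempty X] (P : ℕ → (ℕ → X) → X → Prop)
    (hP : ∀ N v, ∃ x, P N v x)
    (hloc : ∀ N v w x, (∀ k < N, v k = w k) → P N v x → P N w x) :
    ∃ z : ℕ → X, ∀ N, P N z (z N) := by
  choose g hg using hP
  let s : ℕ → ℕ → X := fun N =>
    Nat.rec (fun _ => Classical.arbitrary X) (fun N v => Function.update v N (g N v)) N
  have hs : ∀ N, ∀ k < N, s N k = g k (s k) := by
    intro N
    induction N with
    | zero => intro k hk; omega
    | succ N ih =>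
      intro k hk
      rcases (Nat.lt_succ_iff.1 hk).lt_or_eq with hk | rfl
      · exact (Function.update_of_ne hk.ne _ _).trans (ih k hk)
      · exact Function.update_self ..
  exact ⟨fun N => g N (s N), fun N => hloc N (s N) _ _ (hs N) (hg N (s N))⟩

section Algebra

open Nat

section FactorialAdic

variable {A : Type*} [AddCommGroup A]

def FactorialCoherent (ν : ℕ → ℤ) : Prop := ∀ n, ν (n + 1) ≡ ν n [ZMOD n !]

variable (A) in
def factorialMultiples (n : ℕ) : AddSubgroup A := (zsmulAddGroupHom (n ! : ℤ)).range

/-- `ξ = ν • c`, for the element of `Ẑ = lim ℤ/n!ℤ` represented by a coherent `ν`. -/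
def IsAdicSMul (ν : ℕ → ℤ) (c ξ : A) : Prop := ∀ n, ξ - ν n • c ∈ factorialMultiples A n

def HasAdicSMul (c : A) : Prop := ∀ ν, FactorialCoherent ν → ∃ ξ, IsAdicSMul ν c ξ

theorem zsmul_sub_zsmul_mem_factorialMultiples {k l : ℤ} {n : ℕ} (h : k ≡ l [ZMOD n !])
    (c : A) : k • c - l • c ∈ factorialMultiples A n := by
  obtain ⟨q, hq⟩ := Int.modEq_iff_dvd.1 h.symm
  exact ⟨q • c, by rw [zsmulAddGroupHom_apply, ← sub_smul, hq, mul_smul]⟩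

theorem eq_zero_of_forall_mem_factorialMultiples
    (hred : ∀ a : A, (∀ m : ℕ, 1 ≤ m → ∃ b : A, m • b = a) → a = 0)
    {x : A} (h : ∀ n, x ∈ factorialMultiples A n) : x = 0 :=
  hred x fun m hm => by
    obtain ⟨y, rfl⟩ := h m
    exact ⟨(m - 1)! • y, by
      rw [smul_smul, mul_factorial_pred (by omega), zsmulAddGroupHom_apply, natCast_zsmul]⟩

namespace IsAdicSMul

variable {ν μ : ℕ → ℤ} {c ξ η : A}

theorem unique (hred : ∀ a : A, (∀ m : ℕ, 1 ≤ m → ∃ b : A, m • b = a) → a = 0)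
    (h : IsAdicSMul ν c ξ) (h' : IsAdicSMul ν c η) : ξ = η :=
  sub_eq_zero.1 <| eq_zero_of_forall_mem_factorialMultiples hred fun n => by
    simpa using sub_mem (h n) (h' n)

theorem congr (h : IsAdicSMul ν c ξ) (hνμ : ∀ n, ν n ≡ μ n [ZMOD n !]) : IsAdicSMul μ c ξ :=
  fun n => by simpa using add_mem (h n) (zsmul_sub_zsmul_mem_factorialMultiples (hνμ n) c)

theorem sub (h : IsAdicSMul ν c ξ) (h' : IsAdicSMul μ c η) :
    IsAdicSMul (fun n => ν n - μ n) c (ξ - η) := fun n => by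
  convert sub_mem (h n) (h' n) using 1
  rw [sub_smul]
  abel

theorem const_mul (h : IsAdicSMul ν c ξ) (k : ℤ) : IsAdicSMul (fun n => k * ν n) c (k • ξ) :=
  fun n => by simpa [smul_sub, mul_smul] using zsmul_mem (h n) k

theorem mul_of_zero (h : IsAdicSMul ν c 0) (β : ℕ → ℤ) : IsAdicSMul (fun n => β n * ν n) c 0 :=
  fun n => by simpa [mul_smul] using zsmul_mem (h n) (β n)

theorem zero_of_natCast_mul {c : A} (hc : HasAdicSMul c)
    (htf : ∀ a : A, ∀ n : ℕ, 1 ≤ n → n • a = 0 → a = 0)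
    (hred : ∀ a : A, (∀ m : ℕ, 1 ≤ m → ∃ b : A, m • b = a) → a = 0)
    (hν : FactorialCoherent ν) {m : ℕ} (hm : 1 ≤ m)
    (h : IsAdicSMul (fun n => (m : ℤ) * ν n) c 0) : IsAdicSMul ν c 0 := by
  obtain ⟨ξ, hξ⟩ := hc ν hν
  have hmξ : (m : ℤ) • ξ = 0 := (hξ.const_mul m).unique hred h
  rwa [htf ξ m hm (by rwa [natCast_zsmul] at hmξ)] at hξ

end IsAdicSMul

theorem isAdicSMul_one (c : A) : IsAdicSMul 1 c c := fun n => by simp [zero_mem]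

theorem hasAdicSMul_of_forall_exists {c : A}
    (h : ∀ d : ℕ → ℤ, ∃ ξ : ℕ → A, ∀ n, ξ n = d n • c + (n + 1) • ξ (n + 1)) :
    HasAdicSMul c := by
  intro ν hν
  set d : ℕ → ℤ := fun n => (ν (n + 1) - ν n) / (n ! : ℤ)
  have hd n : (n ! : ℤ) * d n = ν (n + 1) - ν n :=
    Int.mul_ediv_cancel' (Int.modEq_iff_dvd.1 (hν n).symm)
  obtain ⟨ξ, hξ⟩ := h d
  have key n : ξ 0 + ν 0 • c - ν n • c = (n ! : ℤ) • ξ n := by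
    induction n with
    | zero => simp
    | succ n ih =>
      calc ξ 0 + ν 0 • c - ν (n + 1) • c
          = (ξ 0 + ν 0 • c - ν n • c) - (ν (n + 1) - ν n) • c := by rw [sub_smul]; abel
        _ = (n ! : ℤ) • (ξ n - d n • c) := by rw [ih, ← hd, smul_sub, mul_smul]
        _ = ((n + 1)! : ℤ) • ξ (n + 1) := by
          rw [hξ n, add_sub_cancel_left, factorial_succ, Nat.cast_mul, mul_comm, mul_smul,
            natCast_zsmul (ξ (n + 1))]
  exact ⟨ξ 0 + ν 0 • c, fun n => ⟨ξ n, key n ▸ rfl⟩⟩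

end FactorialAdic

section PrimePart

variable {p : ℕ}

def factorialOrdProj (p n : ℕ) : ℤ := (ordProj[p] n ! : ℕ)

def factorialOrdCompl (p n : ℕ) : ℤ := (ordCompl[p] n ! : ℕ)

theorem factorialOrdProj_eq_pow (p n : ℕ) :
    factorialOrdProj p n = (p : ℤ) ^ (n !).factorization p := by
  simp [factorialOrdProj]

theorem factorialOrdProj_mul_factorialOrdCompl (p n : ℕ) :
    factorialOrdProj p n * factorialOrdCompl p n = n ! := by
  rw [factorialOrdProj, factorialOrdCompl, ← Nat.cast_mul, ordProj_mul_ordCompl_eq_self]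

theorem Nat.Prime.isCoprime_factorialOrdCompl (hp : p.Prime) (n : ℕ) :
    IsCoprime (p : ℤ) (factorialOrdCompl p n) :=
  Nat.isCoprime_iff_coprime.2 (coprime_ordCompl hp (factorial_ne_zero n))

theorem Nat.Prime.coprime_factorialOrdProj_factorialOrdCompl (hp : p.Prime) (n : ℕ) :
    (factorialOrdProj p n).natAbs.Coprime (factorialOrdCompl p n).natAbs :=
  (coprime_ordCompl hp (factorial_ne_zero n)).pow_left _

theorem Nat.Prime.isCoprime_factorialOrdProj_factorialOrdCompl (hp : p.Prime) (n : ℕ) :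
    IsCoprime (factorialOrdProj p n) (factorialOrdCompl p n) :=
  Int.isCoprime_iff_gcd_eq_one.2 (hp.coprime_factorialOrdProj_factorialOrdCompl n)

theorem factorialOrdProj_dvd_succ (p n : ℕ) : factorialOrdProj p n ∣ factorialOrdProj p (n + 1) :=
  Int.natCast_dvd_natCast.2 <|
    ordProj_dvd_ordProj_of_dvd (factorial_ne_zero _) (factorial_dvd_factorial n.le_succ) p

theorem factorialOrdCompl_dvd_succ (p n : ℕ) :
    factorialOrdCompl p n ∣ factorialOrdCompl p (n + 1) :=
  Int.natCast_dvd_natCast.2 <| ordCompl_dvd_ordCompl_of_dvd (factorial_dvd_factorial n.le_succ) p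

theorem Int.ModEq.factorial_of_ordProj_of_ordCompl (hp : p.Prime) {n : ℕ} {x y : ℤ}
    (h₁ : x ≡ y [ZMOD factorialOrdProj p n]) (h₂ : x ≡ y [ZMOD factorialOrdCompl p n]) :
    x ≡ y [ZMOD n !] := by
  rw [← factorialOrdProj_mul_factorialOrdCompl]
  exact (Int.modEq_and_modEq_iff_modEq_mul (hp.coprime_factorialOrdProj_factorialOrdCompl n)).1
    ⟨h₁, h₂⟩

theorem mul_modEq_mul_factorial {n : ℕ} {e x y : ℤ} (he : e ≡ 0 [ZMOD factorialOrdCompl p n])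
    (h : x ≡ y [ZMOD factorialOrdProj p n]) : e * x ≡ e * y [ZMOD n !] := by
  rw [Int.modEq_iff_dvd, ← mul_sub, ← factorialOrdProj_mul_factorialOrdCompl, mul_comm]
  exact mul_dvd_mul (by simpa using Int.modEq_zero_iff_dvd.1 he) (Int.modEq_iff_dvd.1 h)

theorem FactorialCoherent.mul {e ν : ℕ → ℤ} (he : FactorialCoherent e)
    (he₀ : ∀ n, e n ≡ 0 [ZMOD factorialOrdCompl p n])
    (hν : ∀ n, ν (n + 1) ≡ ν n [ZMOD factorialOrdProj p n]) :
    FactorialCoherent fun n => e n * ν n := fun n =>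
  ((he n).mul_right _).trans (mul_modEq_mul_factorial (he₀ n) (hν n))

theorem exists_factorialCoherent_modEq (hp : p.Prime) (a b d : ℤ)
    (hb : ∀ n, IsCoprime b (factorialOrdCompl p n)) :
    ∃ x : ℕ → ℤ, FactorialCoherent x ∧
      (∀ n, x n ≡ a [ZMOD factorialOrdProj p n]) ∧
      ∀ n, b * x n ≡ d [ZMOD factorialOrdCompl p n] := by
  have hcrt n : ∃ y : ℤ,
      y ≡ a [ZMOD factorialOrdProj p n] ∧ b * y ≡ d [ZMOD factorialOrdCompl p n] := by
    obtain ⟨u, v, huv⟩ := hp.isCoprime_factorialOrdProj_factorialOrdCompl n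
    obtain ⟨s, t, hst⟩ := hb n
    refine ⟨a * v * factorialOrdCompl p n + s * d * u * factorialOrdProj p n,
      Int.modEq_iff_dvd.2 ⟨a * u - s * d * u, ?_⟩,
      Int.modEq_iff_dvd.2 ⟨d * v - a * b * v + t * d * u * factorialOrdProj p n, ?_⟩⟩
    · linear_combination (-a) * huv
    · linear_combination (-d * u * factorialOrdProj p n) * hst - d * huv
  choose x hxa hxd using hcrt
  refine ⟨x, fun n => (Int.ModEq.factorial_of_ordProj_of_ordCompl hp ?_ ?_), hxa, hxd⟩
  · exact ((hxa (n + 1)).of_dvd (factorialOrdProj_dvd_succ p n)).trans (hxa n).symm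
  · refine Int.modEq_iff_dvd.2 ((hb n).symm.dvd_of_dvd_mul_left ?_)
    rw [mul_sub]
    exact Int.modEq_iff_dvd.1 (((hxd (n + 1)).of_dvd (factorialOrdCompl_dvd_succ p n)).trans
      (hxd n).symm)

end PrimePart

section Digits

def digitSum (p : ℕ) (τ : ℕ → Bool) (m : ℕ) : ℤ := ∑ i ∈ Finset.range m, ((τ i).toNat : ℤ) * p ^ i

theorem digitSum_add_modEq (p : ℕ) (τ : ℕ → Bool) (m r : ℕ) :
    digitSum p τ (m + r) ≡ digitSum p τ m [ZMOD p ^ m] := by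
  rw [digitSum, Finset.sum_range_add, Int.modEq_iff_dvd, ← digitSum, sub_add_cancel_left,
    dvd_neg]
  exact Finset.dvd_sum fun i _ => (pow_dvd_pow _ (m.le_add_right i)).mul_left _

theorem exists_mul_digitSum_sub_modEq (p : ℕ) {τ τ' : ℕ → Bool} (h : τ ≠ τ') :
    ∃ j : ℕ, ∀ m, ∃ β : ℤ, β * (digitSum p τ m - digitSum p τ' m) ≡ p ^ j [ZMOD p ^ m] := by
  classical
  have hex : ∃ j, τ j ≠ τ' j := Function.ne_iff.1 h
  set j := Nat.find hex
  set Δ : ℕ → ℤ := fun i => (τ i).toNat - (τ' i).toNat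
  have hΔ : ∀ i < j, Δ i = 0 := fun i hi => by simp [Δ, not_not.1 (Nat.find_min hex hi)]
  have hΔj : Δ j ^ 2 = 1 := by
    have := Nat.find_spec hex
    simp only [Δ]
    revert this
    cases τ j <;> cases τ' j <;> simp
  have hsub m : digitSum p τ m - digitSum p τ' m = ∑ i ∈ Finset.range m, Δ i * p ^ i := by
    simp [digitSum, Δ, sub_mul]
  refine ⟨j, fun m => ?_⟩
  rcases le_or_gt m j with hmj | hjm
  · refine ⟨0, Int.modEq_iff_dvd.2 ?_⟩
    simpa using pow_dvd_pow (p : ℤ) hmj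
  obtain ⟨r, rfl⟩ : ∃ r, m = j + (r + 1) := ⟨m - j - 1, by omega⟩
  set R := ∑ i ∈ Finset.range r, Δ (j + (i + 1)) * (p : ℤ) ^ i
  have hsplit :
      digitSum p τ (j + (r + 1)) - digitSum p τ' (j + (r + 1)) = p ^ j * (Δ j + p * R) := by
    rw [hsub, Finset.sum_range_add, Finset.sum_eq_zero fun i hi => by
      rw [hΔ i (Finset.mem_range.1 hi), zero_mul], zero_add, Finset.sum_range_succ', mul_add,
      add_comm, ← mul_assoc, Finset.mul_sum]
    congr 1
    · simp [mul_comm]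
    · exact Finset.sum_congr rfl fun i _ => by ring
  have hunit : IsCoprime (Δ j + p * R) (p : ℤ) := ⟨Δ j, -(Δ j * R), by linear_combination hΔj⟩
  obtain ⟨u, v, huv⟩ := hunit.pow_right (n := j + (r + 1))
  exact ⟨u, Int.modEq_iff_dvd.2 ⟨v * p ^ j, by rw [hsplit]; linear_combination -(p : ℤ) ^ j * huv⟩⟩

end Digits

section Reduced

variable {A : Type*} [AddCommGroup A] {c : A}

theorem isAdicSMul_zero_of_modEq_zero {p : ℕ} (hp : p.Prime)
    (hcard : Cardinal.mk A < 2 ^ Cardinal.aleph0)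
    (htf : ∀ a : A, ∀ n : ℕ, 1 ≤ n → n • a = 0 → a = 0)
    (hred : ∀ a : A, (∀ m : ℕ, 1 ≤ m → ∃ b : A, m • b = a) → a = 0)
    (hc : HasAdicSMul c) {e : ℕ → ℤ} (he : FactorialCoherent e)
    (he₀ : ∀ n, e n ≡ 0 [ZMOD factorialOrdCompl p n]) : IsAdicSMul e c 0 := by
  set D : (ℕ → Bool) → ℕ → ℤ := fun τ n => digitSum p τ ((n !).factorization p)
  have hD τ : FactorialCoherent fun n => e n * D τ n := he.mul he₀ fun n => by
    obtain ⟨r, hr⟩ := Nat.exists_eq_add_of_le <| (factorization_le_iff_dvd (factorial_ne_zero n)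
      (factorial_ne_zero (n + 1))).2 (factorial_dvd_factorial n.le_succ) p
    simpa [D, hr, factorialOrdProj_eq_pow] using digitSum_add_modEq p τ _ r
  choose ξ hξ using fun τ => hc _ (hD τ)
  obtain ⟨τ, τ', hne, heq⟩ : ∃ τ τ', τ ≠ τ' ∧ ξ τ = ξ τ' := by
    simpa [Function.Injective, and_comm] using not_injective_of_mk_lt_continuum hcard ξ
  -- `D τ - D τ'` is `p ^ j` times a `p`-adic unit, with inverse `β`.
  obtain ⟨j, hj⟩ := exists_mul_digitSum_sub_modEq p hne
  choose β hβ using fun n => hj ((n !).factorization p)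
  have hdiff : IsAdicSMul (fun n => e n * (D τ n - D τ' n)) c 0 := by
    simpa [heq, mul_sub] using (hξ τ).sub (hξ τ')
  refine IsAdicSMul.zero_of_natCast_mul hc htf hred he (Nat.one_le_pow j p hp.pos) <|
    (hdiff.mul_of_zero β).congr fun n => ?_
  calc β n * (e n * (D τ n - D τ' n)) = e n * (β n * (D τ n - D τ' n)) := by ring
    _ ≡ e n * p ^ j [ZMOD n !] := mul_modEq_mul_factorial (he₀ n) (by
        simpa [factorialOrdProj_eq_pow] using hβ n)
    _ = ((p ^ j : ℕ) : ℤ) * e n := by push_cast; ring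

theorem exists_pow_nsmul_eq {p : ℕ} (hp : p.Prime)
    (hcard : Cardinal.mk A < 2 ^ Cardinal.aleph0)
    (htf : ∀ a : A, ∀ n : ℕ, 1 ≤ n → n • a = 0 → a = 0)
    (hred : ∀ a : A, (∀ m : ℕ, 1 ≤ m → ∃ b : A, m • b = a) → a = 0)
    (hc : HasAdicSMul c) (k : ℕ) : ∃ x : A, (p ^ k) • x = c := by
  obtain ⟨e, he, he₁, he₀⟩ := exists_factorialCoherent_modEq hp 1 1 0 fun _ => isCoprime_one_left
  obtain ⟨μ, hμ, hμ₀, hμ₁⟩ := exists_factorialCoherent_modEq hp 0 (p ^ k) 1 fun n =>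
    (hp.isCoprime_factorialOrdCompl n).pow_left
  obtain ⟨ξ, hξ⟩ := hc μ hμ
  -- `1 ≡ e + p ^ k * μ` modulo every `n !`, and `e` annihilates `c`.
  have hcμ : IsAdicSMul (fun n => (p : ℤ) ^ k * μ n) c c := by
    have h := (isAdicSMul_one c).sub (isAdicSMul_zero_of_modEq_zero hp hcard htf hred hc he
      fun n => by simpa using he₀ n)
    rw [sub_zero] at h
    refine h.congr fun n => Int.ModEq.factorial_of_ordProj_of_ordCompl hp ?_ ?_
    · calc (1 : ℤ) - e n ≡ 1 - 1 [ZMOD factorialOrdProj p n] := (Int.ModEq.refl 1).sub (he₁ n)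
        _ = (p : ℤ) ^ k * 0 := by ring
        _ ≡ (p : ℤ) ^ k * μ n [ZMOD factorialOrdProj p n] := ((hμ₀ n).mul_left _).symm
    · calc (1 : ℤ) - e n ≡ 1 - 0 [ZMOD factorialOrdCompl p n] :=
          (Int.ModEq.refl 1).sub (by simpa using he₀ n)
        _ = 1 := by ring
        _ ≡ (p : ℤ) ^ k * μ n [ZMOD factorialOrdCompl p n] := (hμ₁ n).symm
  refine ⟨ξ, ?_⟩
  rw [← natCast_zsmul, Nat.cast_pow]
  exact (hξ.const_mul _).unique hred hcμ

theorem exists_mul_nsmul_eq_of_coprime {a b : ℕ} (hab : a.Coprime b) (ha : ∃ x : A, a • x = c)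
    (hb : ∃ y : A, b • y = c) : ∃ z : A, (a * b) • z = c := by
  obtain ⟨x, rfl⟩ := ha
  obtain ⟨y, hy⟩ := hb
  obtain ⟨u, v, huv⟩ := Nat.isCoprime_iff_coprime.2 hab
  refine ⟨u • y + v • x, ?_⟩
  calc (a * b) • (u • y + v • x) = (u * a) • (b • y) + (v * b) • (a • x) := by
        simp only [← natCast_zsmul]; push_cast; module
    _ = a • x := by rw [hy, ← add_smul, huv, one_smul]

theorem exists_nsmul_eq_of_forall_prime_pow (h : ∀ p k : ℕ, p.Prime → ∃ x : A, (p ^ k) • x = c) :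
    ∀ m : ℕ, 1 ≤ m → ∃ x : A, m • x = c := by
  intro m
  induction m using Nat.recOnPosPrimePosCoprime with
  | prime_pow p k hp _ => exact fun _ => h p k hp
  | zero => exact fun h => absurd h (by norm_num)
  | one => exact fun _ => ⟨c, one_smul _ _⟩
  | coprime a b ha hb hab iha ihb =>
    exact fun _ => exists_mul_nsmul_eq_of_coprime hab (iha ha.le) (ihb hb.le)

theorem eq_zero_of_hasAdicSMul (hcard : Cardinal.mk A < 2 ^ Cardinal.aleph0)
    (htf : ∀ a : A, ∀ n : ℕ, 1 ≤ n → n • a = 0 → a = 0)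
    (hred : ∀ a : A, (∀ m : ℕ, 1 ≤ m → ∃ b : A, m • b = a) → a = 0)
    (hc : HasAdicSMul c) : c = 0 :=
  hred c <| exists_nsmul_eq_of_forall_prime_pow fun _ k hp =>
    exists_pow_nsmul_eq hp hcard htf hred hc k

end Reduced

end Algebra

section HomLemmas

variable {H A : Type*} [Group H] [AddCommGroup A] {φ : H → A}

def homOfMapMul (hφ : ∀ x y, φ (x * y) = φ x + φ y) : H →* Multiplicative A :=
  MonoidHom.mk' (fun x => Multiplicative.ofAdd (φ x)) hφ

theorem map_zpow_of_map_mul (hφ : ∀ x y, φ (x * y) = φ x + φ y) (x : H) (k : ℤ) :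
    φ (x ^ k) = k • φ x :=
  congrArg Multiplicative.toAdd (map_zpow (homOfMapMul hφ) x k)

theorem map_pow_of_map_mul (hφ : ∀ x y, φ (x * y) = φ x + φ y) (x : H) (k : ℕ) :
    φ (x ^ k) = k • φ x :=
  congrArg Multiplicative.toAdd (map_pow (homOfMapMul hφ) x k)

theorem map_div_of_map_mul (hφ : ∀ x y, φ (x * y) = φ x + φ y) (x y : H) :
    φ (x / y) = φ x - φ y :=
  congrArg Multiplicative.toAdd (map_div (homOfMapMul hφ) x y)

theorem map_one_of_map_mul (hφ : ∀ x y, φ (x * y) = φ x + φ y) : φ 1 = 0 :=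
  congrArg Multiplicative.toAdd (map_one (homOfMapMul hφ))

theorem isOpen_setOf_map_eq_zero [TopologicalSpace H] [IsTopologicalGroup H]
    (hφ : ∀ x y, φ (x * y) = φ x + φ y) (h : ∀ᶠ x in 𝓝 1, φ x = 0) : IsOpen {x | φ x = 0} :=
  Subgroup.isOpen_of_mem_nhds (homOfMapMul hφ).ker h

theorem Filter.Frequently.map_zpow_eq [TopologicalSpace H] [IsTopologicalGroup H]
    (hφ : ∀ x y, φ (x * y) = φ x + φ y) {a : A} (h : ∃ᶠ x in 𝓝 (1 : H), φ x = a) (k : ℤ) :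
    ∃ᶠ x in 𝓝 (1 : H), φ x = k • a :=
  ((continuous_zpow k).tendsto' 1 1 (one_zpow k)).frequently
    (h.mono fun x hx => by rw [map_zpow_of_map_mul hφ, hx])

end HomLemmas

section Chain

variable {H A : Type*} [Group H] [AddCommGroup A]

/-- `nestedPow z n k x = z n * (z (n+1) * ⋯ (z (n+k-1) * x ^ (n+k)) ⋯ ^ (n+2)) ^ (n+1)` -/
def nestedPow (z : ℕ → H) : ℕ → ℕ → H → H
  | _, 0, x => x
  | n, k + 1, x => z n * nestedPow z (n + 1) k x ^ (n + 1)

theorem nestedPow_succ' (z : ℕ → H) (n k : ℕ) (x : H) :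
    nestedPow z n (k + 1) x = nestedPow z n k (z (n + k) * x ^ (n + k + 1)) := by
  induction k generalizing n with
  | zero => rfl
  | succ k ih => rw [nestedPow, ih, nestedPow, ← add_assoc, Nat.add_right_comm n 1 k]

theorem nestedPow_congr {z z' : ℕ → H} {n k : ℕ} (h : ∀ i, n ≤ i → i < n + k → z i = z' i) :
    nestedPow z n k = nestedPow z' n k := by
  induction k generalizing n with
  | zero => rfl
  | succ k ih =>
    ext x
    rw [nestedPow, nestedPow, h n le_rfl (by omega),
      ih fun i hi hi' => h i (by omega) (by omega)]

theorem continuous_nestedPow [TopologicalSpace H] [IsTopologicalGroup H] (z : ℕ → H) (n k : ℕ) :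
    Continuous (nestedPow z n k) := by
  induction k generalizing n with
  | zero => exact continuous_id
  | succ k ih => exact continuous_const.mul ((ih (n + 1)).pow _)

theorem exists_seq_eq_add_succ_nsmul [MetricSpace H] [IsTopologicalGroup H] [CompleteSpace H]
    {φ : H → A} (hφ : ∀ x y, φ (x * y) = φ x + φ y) (γ : ℕ → A)
    (hγ : ∀ n, ∃ᶠ x in 𝓝 (1 : H), φ x = γ n) :
    ∃ ξ : ℕ → A, ∀ n, ξ n = γ n + (n + 1) • ξ (n + 1) := by
  obtain ⟨z, hz⟩ := exists_seq_forall_of_local (fun N v x => φ x = γ N ∧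
      ∀ n ≤ N, dist (nestedPow v n (N - n) x) (nestedPow v n (N - n) 1) < 1 / 2 / 2 ^ (N - n))
    (fun N v => ((hγ N).and_eventually <| (eventually_all_finite (Set.finite_le_nat N)).2
      fun n _ => Metric.tendsto_nhds.1 ((continuous_nestedPow v n _).tendsto 1) _
        (by positivity)).exists)
    (fun N v w x hvw hx => ⟨hx.1, fun n hn => by
      rw [← nestedPow_congr fun i _ hi => hvw i (by omega)]
      exact hx.2 n hn⟩)
  have hstep n k : dist (nestedPow z n k 1) (nestedPow z n (k + 1) 1) ≤ 1 / 2 / 2 ^ k := by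
    have := (hz (n + k)).2 n (by omega)
    rw [Nat.add_sub_cancel_left] at this
    rw [nestedPow_succ', one_pow, mul_one, dist_comm]
    exact this.le
  choose y hy using fun n =>
    cauchySeq_tendsto_of_complete (cauchySeq_of_le_geometric_two (hstep n))
  have hrec n : y n = z n * y (n + 1) ^ (n + 1) :=
    tendsto_nhds_unique ((hy n).comp (tendsto_add_atTop_nat 1))
      (tendsto_const_nhds.mul ((hy (n + 1)).pow _))
  exact ⟨fun n => φ (y n), fun n => by
    simp only [hrec n, hφ, map_pow_of_map_mul hφ, (hz n).1]⟩

end Chain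

section Cantor

variable {H A : Type*} [Group H] [AddCommGroup A]

def partialProd (z : ℕ → H) (σ : ℕ → Bool) : ℕ → ℕ → H
  | _, 0 => 1
  | n, k + 1 => (if σ n then z n else 1) * partialProd z σ (n + 1) k

theorem partialProd_succ' (z : ℕ → H) (σ : ℕ → Bool) (n k : ℕ) :
    partialProd z σ n (k + 1) = partialProd z σ n k * if σ (n + k) then z (n + k) else 1 := by
  induction k generalizing n with
  | zero => simp [partialProd]
  | succ k ih => rw [partialProd, ih, partialProd, mul_assoc, Nat.add_right_comm n 1 k, add_assoc]

theorem partialProd_congr {z z' : ℕ → H} (σ : ℕ → Bool) {n k : ℕ}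
    (h : ∀ i, n ≤ i → i < n + k → z i = z' i) : partialProd z σ n k = partialProd z' σ n k := by
  induction k generalizing n with
  | zero => rfl
  | succ k ih =>
    rw [partialProd, partialProd, h n le_rfl (by omega),
      ih fun i hi hi' => h i (by omega) (by omega)]

theorem finite_range_partialProd (z : ℕ → H) (n k : ℕ) :
    (Set.range fun σ => partialProd z σ n k).Finite := by
  induction k generalizing n with
  | zero => exact (Set.finite_singleton 1).subset (Set.range_subset_iff.2 fun _ => rfl)
  | succ k ih =>
    refine ((Set.toFinite {1, z n}).mul (ih (n + 1))).subset (Set.range_subset_iff.2 fun σ => ?_)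
    exact Set.mul_mem_mul (by split_ifs <;> simp) (Set.mem_range_self σ)

theorem exists_tails_of_dist_partialProd_le [MetricSpace H] [IsTopologicalGroup H]
    [CompleteSpace H] (z : ℕ → H) (r : ℕ → ℝ) (hz : ∀ σ n k,
      dist (partialProd z σ (n + 1) k) (partialProd z σ (n + 1) (k + 1)) ≤ r n / 2 / 2 ^ k) :
    ∃ T : (ℕ → Bool) → ℕ → H, ∀ σ n,
      T σ n = (if σ n then z n else 1) * T σ (n + 1) ∧ dist (T σ (n + 1)) 1 ≤ r n := by
  choose L hL using fun σ n =>
    cauchySeq_tendsto_of_complete (cauchySeq_of_le_geometric_two (hz σ n))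
  have hrec σ n : L σ n = (if σ (n + 1) then z (n + 1) else 1) * L σ (n + 1) :=
    tendsto_nhds_unique ((hL σ n).comp (tendsto_add_atTop_nat 1))
      (tendsto_const_nhds.mul (hL σ (n + 1)))
  refine ⟨fun σ n => (if σ n then z n else 1) * L σ n, fun σ n => ⟨?_, ?_⟩⟩
  · dsimp only
    rw [← hrec]
  · dsimp only
    rw [← hrec, dist_comm]
    exact dist_le_of_le_geometric_two_of_tendsto₀ (hz σ n) (hL σ n)

/-- Where `σ` and `σ'` first differ, the quotient of their tails would take the value `φ (z n)`. -/
theorem injective_of_tails {φ : H → A} (hφ : ∀ x y, φ (x * y) = φ x + φ y) {z : ℕ → H}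
    {U : ℕ → Set H} (hU : ∀ n, ∀ v ∈ U n, ∀ w ∈ U n, φ (v / w) ≠ φ (z n))
    {T : (ℕ → Bool) → ℕ → H}
    (hT : ∀ σ n, T σ n = (if σ n then z n else 1) * T σ (n + 1) ∧ T σ (n + 1) ∈ U n) :
    Function.Injective fun σ => φ (T σ 0) := by
  intro σ σ' h
  have hstep n (hn : φ (T σ n) = φ (T σ' n)) :
      σ n = σ' n ∧ φ (T σ (n + 1)) = φ (T σ' (n + 1)) := by
    have hne := hU n _ (hT σ n).2 _ (hT σ' n).2
    have hne' := hU n _ (hT σ' n).2 _ (hT σ n).2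
    rw [(hT σ n).1, (hT σ' n).1, hφ, hφ] at hn
    rw [map_div_of_map_mul hφ] at hne hne'
    cases hσ : σ n <;> cases hσ' : σ' n <;>
      simp only [hσ, hσ', map_one_of_map_mul hφ, zero_add, add_right_inj, if_true,
        Bool.false_eq_true, if_false, true_and, reduceCtorEq, false_and] at hn ⊢
    · exact hn
    · exact hne (by rw [hn]; abel)
    · exact hne' (by rw [← hn]; abel)
    · exact hn
  have hall n : φ (T σ n) = φ (T σ' n) := by
    induction n with
    | zero => exact h
    | succ n ih => exact (hstep n ih).2
  exact funext fun n => (hstep n (hall n)).1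

theorem eventually_forall_dist_mul_lt [MetricSpace H] [IsTopologicalGroup H] {S : Set H}
    (hS : S.Finite) {ε : ℝ} (hε : 0 < ε) : ∀ᶠ x in 𝓝 (1 : H), ∀ q ∈ S, dist (q * x) q < ε :=
  (eventually_all_finite hS).2 fun q _ => by
    simpa using Metric.tendsto_nhds.1 ((continuous_const_mul q).tendsto 1) ε hε

theorem exists_seq_dist_partialProd_le [MetricSpace H] [IsTopologicalGroup H] {P : H → Prop}
    (hP : ∃ᶠ x in 𝓝 (1 : H), P x) {r : H → ℝ} (hr : ∀ x, 0 < r x) :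
    ∃ z : ℕ → H, (∀ n, P (z n)) ∧ ∀ σ n k,
      dist (partialProd z σ (n + 1) k) (partialProd z σ (n + 1) (k + 1)) ≤ r (z n) / 2 / 2 ^ k := by
  obtain ⟨z, hz⟩ := exists_seq_forall_of_local (fun N v x => P x ∧ ∀ n < N, ∀ σ,
      dist (partialProd v σ (n + 1) (N - n - 1) * x) (partialProd v σ (n + 1) (N - n - 1)) <
        r (v n) / 2 / 2 ^ (N - n - 1))
    (fun N v => by
      refine (hP.and_eventually <|
        (eventually_all_finite (Set.finite_lt_nat N)).2 fun n _ => ?_).exists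
      have := hr (v n)
      exact (eventually_forall_dist_mul_lt (finite_range_partialProd v (n + 1) (N - n - 1))
        (by positivity)).mono fun x hx σ => hx _ (Set.mem_range_self σ))
    (fun N v w x hvw hx => ⟨hx.1, fun n hn σ => by
      rw [← hvw n hn, ← partialProd_congr σ fun i _ hi => hvw i (by omega)]
      exact hx.2 n hn σ⟩)
  refine ⟨z, fun n => (hz n).1, fun σ n k => ?_⟩
  have := (hz (n + 1 + k)).2 n (by omega) σ
  rw [show n + 1 + k - n - 1 = k by omega] at this
  rw [partialProd_succ', dist_comm]
  split_ifs
  · exact this.le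
  · rw [mul_one, dist_self]
    have := hr (z n)
    positivity

theorem exists_injective_of_frequently_ne_zero [MetricSpace H] [IsTopologicalGroup H]
    [CompleteSpace H] {φ : H → A} (hφ : ∀ x y, φ (x * y) = φ x + φ y)
    (hne : ∃ᶠ x in 𝓝 (1 : H), φ x ≠ 0) (havoid : ∀ a ≠ 0, ∀ᶠ x in 𝓝 (1 : H), φ x ≠ a) :
    ∃ ψ : (ℕ → Bool) → A, Function.Injective ψ := by
  have hρ a : ∃ ρ > 0, a ≠ 0 → ∀ v w : H, dist v 1 < ρ → dist w 1 < ρ → φ (v / w) ≠ a := by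
    by_cases ha : a = 0
    · exact ⟨1, one_pos, fun h => absurd ha h⟩
    obtain ⟨V, hV, hVs⟩ := exists_nhds_split_inv (havoid a ha)
    obtain ⟨ρ, hρ, hball⟩ := Metric.mem_nhds_iff.1 hV
    exact ⟨ρ, hρ, fun _ v w hv hw => hVs v (hball hv) w (hball hw)⟩
  choose ρ hρ₀ hρ using hρ
  obtain ⟨z, hz, hdist⟩ :=
    exists_seq_dist_partialProd_le hne (r := fun x => ρ (φ x) / 2) fun x => half_pos (hρ₀ _)
  obtain ⟨T, hT⟩ := exists_tails_of_dist_partialProd_le z (fun n => ρ (φ (z n)) / 2) hdist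
  exact ⟨_, injective_of_tails hφ (U := fun n => Metric.closedBall 1 (ρ (φ (z n)) / 2))
    (fun n v hv w hw => hρ _ (hz n) v w (lt_of_le_of_lt hv (half_lt_self (hρ₀ _)))
      (lt_of_le_of_lt hw (half_lt_self (hρ₀ _)))) hT⟩

end Cantor

/-- If `A` is an abelian group of cardinality `< 2 ^ ℵ₀`, torsion-free and reduced,
then every group homomorphism from a completely metrizable topological group to `A`
has open kernel. -/
theorem openKernel_of_reduced_torsionFree_small
    {A : Type*} [AddCommGroup A]
    (hcard : Cardinal.mk A < 2 ^ Cardinal.aleph0)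
    (htf : ∀ a : A, ∀ n : ℕ, 1 ≤ n → n • a = 0 → a = 0)
    (hred : ∀ a : A, (∀ m : ℕ, 1 ≤ m → ∃ b : A, m • b = a) → a = 0)
    {H : Type*} [Group H] [tH : TopologicalSpace H] [IsTopologicalGroup H]
    (hH : ∃ mH : MetricSpace H,
      mH.toUniformSpace.toTopologicalSpace = tH ∧ @CompleteSpace H mH.toUniformSpace)
    (φ : H → A) (hφ : ∀ x y : H, φ (x * y) = φ x + φ y) :
    IsOpen {x : H | φ x = 0} := by
  obtain ⟨mH, rfl, hcomplete⟩ := hH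
  let _ : MetricSpace H := mH
  have hC a (ha : ∃ᶠ x in 𝓝 (1 : H), φ x = a) : a = 0 :=
    eq_zero_of_hasAdicSMul hcard htf hred <| hasAdicSMul_of_forall_exists fun d =>
      exists_seq_eq_add_succ_nsmul hφ _ fun n => ha.map_zpow_eq hφ (d n)
  refine isOpen_setOf_map_eq_zero hφ (by_contra fun h => ?_)
  obtain ⟨ψ, hψ⟩ := exists_injective_of_frequently_ne_zero hφ (not_eventually.1 h)
    fun a ha => not_frequently.1 (mt (hC a) ha)
  exact not_injective_of_mk_lt_continuum hcard ψ hψ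
end

section
/- Let H be a locally compact Hausdorff topological group, G a group with |G| < 2^{ℵ₀}, and φ : H → G a group homomorphism. Then there exists an open neighborhood V of 1_H such that for every neighborhood V' of 1_H with V' ⊆ V, φ(V') = φ(V). -/
/-!
Suppose no such `V` exists. Then inside every compact neighbourhood `K` of `1` there are a point
`x` and a much smaller compact neighbourhood `K'` with `x • K' ⊆ K` and `φ x ∉ φ '' (K' / K')`.
Iterating gives a Cantor scheme: for each `s : ℕ → Bool` the translates of `K n` by the products
of the `x i` with `s i = true`, `i < n`, are nested compact sets, so they share a point `y s`.
If `s` and `t` first differ at `n`, then `y s` and `y t` differ by `x n` modulo `K (n+1) / K (n+1)`,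
so `φ (y s) ≠ φ (y t)`. Hence `s ↦ φ (y s)` embeds a set of size `2 ^ ℵ₀` into `G`.
-/

open scoped Pointwise
open Set Filter Topology

theorem two_pow_aleph0_le_mk_of_injective {α : Type*} {f : (ℕ → Bool) → α}
    (hf : Function.Injective f) : 2 ^ Cardinal.aleph0 ≤ Cardinal.mk α := by
  simpa [Cardinal.mk_arrow] using Cardinal.lift_mk_le'.mpr ⟨⟨f, hf⟩⟩

section CantorScheme

variable {H G : Type*} [Group H] [Group G]

def selectProd (x : ℕ → H) (s : ℕ → Bool) : ℕ → H
  | 0 => 1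
  | n + 1 => selectProd x s n * if s n then x n else 1

theorem selectProd_eq_of_forall_lt {x : ℕ → H} {s t : ℕ → Bool} {n : ℕ}
    (h : ∀ i < n, s i = t i) : selectProd x s n = selectProd x t n := by
  induction n with
  | zero => rfl
  | succ n ih =>
    simp only [selectProd, h n n.lt_succ_self, ih fun i hi => h i (hi.trans n.lt_succ_self)]

theorem map_ne_map_of_mem_smul {φ : H →* G} {K : Set H} {a p y z : H}
    (ha : φ a ∉ φ '' (K / K)) (hy : y ∈ (p * a) • K) (hz : z ∈ p • K) : φ y ≠ φ z := by
  obtain ⟨c, hc, rfl⟩ := hy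
  obtain ⟨c', hc', rfl⟩ := hz
  intro h
  refine ha ⟨c' / c, div_mem_div hc' hc, ?_⟩
  simp only [smul_eq_mul, map_mul, mul_assoc, mul_right_inj] at h
  rw [map_div, ← h, mul_div_cancel_right]

structure IsSeparatingScheme [TopologicalSpace H] (φ : H →* G) (K : ℕ → Set H) (x : ℕ → H) :
    Prop where
  isCompact : ∀ n, IsCompact (K n)
  isClosed : ∀ n, IsClosed (K n)
  one_mem : ∀ n, 1 ∈ K n
  succ_subset : ∀ n, K (n + 1) ⊆ K n
  smul_succ_subset : ∀ n, x n • K (n + 1) ⊆ K n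
  map_notMem_image_div : ∀ n, φ (x n) ∉ φ '' (K (n + 1) / K (n + 1))

namespace IsSeparatingScheme

variable [TopologicalSpace H] {φ : H →* G} {K : ℕ → Set H} {x : ℕ → H}

theorem selectProd_smul_succ_subset (hS : IsSeparatingScheme φ K x) (s : ℕ → Bool) (n : ℕ) :
    selectProd x s (n + 1) • K (n + 1) ⊆ selectProd x s n • K n := by
  rw [selectProd, mul_smul]
  refine smul_set_mono ?_
  split_ifs
  · exact hS.smul_succ_subset n
  · rw [one_smul]
    exact hS.succ_subset n

theorem nonempty_iInter_selectProd_smul [ContinuousMul H] (hS : IsSeparatingScheme φ K x)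
    (s : ℕ → Bool) : (⋂ n, selectProd x s n • K n).Nonempty :=
  IsCompact.nonempty_iInter_of_sequence_nonempty_isCompact_isClosed _
    (hS.selectProd_smul_succ_subset s) (fun n => ⟨_, smul_mem_smul_set (hS.one_mem n)⟩)
    (by simpa [selectProd] using hS.isCompact 0) (fun n => (hS.isClosed n).smul _)

theorem map_ne_map_of_forall_lt (hS : IsSeparatingScheme φ K x) {s t : ℕ → Bool} {n : ℕ}
    (hlt : ∀ i < n, s i = t i) (hs : s n = true) (ht : t n = false) {y z : H}
    (hy : y ∈ ⋂ n, selectProd x s n • K n) (hz : z ∈ ⋂ n, selectProd x t n • K n) :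
    φ y ≠ φ z := by
  refine map_ne_map_of_mem_smul (hS.map_notMem_image_div n) (p := selectProd x s n) ?_ ?_
  · simpa [selectProd, hs] using mem_iInter.mp hy (n + 1)
  · simpa [selectProd, ht, selectProd_eq_of_forall_lt hlt] using mem_iInter.mp hz (n + 1)

theorem exists_injective [ContinuousMul H] (hS : IsSeparatingScheme φ K x) :
    ∃ f : (ℕ → Bool) → G, Function.Injective f := by
  choose y hy using hS.nonempty_iInter_selectProd_smul
  refine ⟨fun s => φ (y s), fun s t hst => ?_⟩
  by_contra hne
  have hlt : ∀ i < PiNat.firstDiff s t, s i = t i := fun i => PiNat.apply_eq_of_lt_firstDiff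
  cases hs : s (PiNat.firstDiff s t) <;> cases ht : t (PiNat.firstDiff s t)
  · exact PiNat.apply_firstDiff_ne hne (hs.trans ht.symm)
  · exact hS.map_ne_map_of_forall_lt (fun i hi => (hlt i hi).symm) ht hs (hy t) (hy s) hst.symm
  · exact hS.map_ne_map_of_forall_lt hlt hs ht (hy s) (hy t) hst
  · exact PiNat.apply_firstDiff_ne hne (hs.trans ht.symm)

end IsSeparatingScheme

variable [TopologicalSpace H] [IsTopologicalGroup H] [WeaklyLocallyCompactSpace H]

theorem exists_isCompact_isClosed_div_subset {N : Set H} (hN : N ∈ 𝓝 1) :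
    ∃ K ∈ 𝓝 (1 : H), IsCompact K ∧ IsClosed K ∧ K / K ⊆ N := by
  obtain ⟨W, hW, hWN⟩ := exists_nhds_split_inv hN
  obtain ⟨K, ⟨hK, hKc, hKcl⟩, hKW⟩ := (isCompact_isClosed_basis_nhds (1 : H)).mem_iff.mp hW
  exact ⟨K, hK, hKc, hKcl, div_subset_iff.mpr fun a ha b hb => hWN a (hKW ha) b (hKW hb)⟩

theorem exists_separating_step {φ : H →* G} {K : Set H}
    (hne : ∃ V ∈ 𝓝 (1 : H), V ⊆ interior K ∧ φ '' V ≠ φ '' interior K) :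
    ∃ x : H, ∃ K' ∈ 𝓝 (1 : H), IsCompact K' ∧ IsClosed K' ∧
      K' ⊆ K ∧ x • K' ⊆ K ∧ φ x ∉ φ '' (K' / K') := by
  obtain ⟨V, hV, hVK, hVne⟩ := hne
  obtain ⟨-, ⟨x, hxK, rfl⟩, hxV⟩ := exists_of_ssubset ((image_mono hVK).ssubset_of_ne hVne)
  have hN : V ∩ x⁻¹ • K ∈ 𝓝 1 := by
    have := smul_mem_nhds_smul x⁻¹ (mem_interior_iff_mem_nhds.mp hxK)
    exact inter_mem hV (by rwa [smul_eq_mul, inv_mul_cancel] at this)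
  obtain ⟨K', hK', hK'c, hK'cl, hK'N⟩ := exists_isCompact_isClosed_div_subset hN
  have hK'V : K' / K' ⊆ V := hK'N.trans inter_subset_left
  have hK'sub : K' ⊆ V ∩ x⁻¹ • K := fun k hk => by
    simpa using hK'N (div_mem_div hk (mem_of_mem_nhds hK'))
  refine ⟨x, K', hK', hK'c, hK'cl, ?_, ?_, fun hx => hxV (image_mono hK'V hx)⟩
  · exact hK'sub.trans (inter_subset_left.trans (hVK.trans interior_subset))
  · simpa using smul_set_mono (a := x) (hK'sub.trans inter_subset_right)

theorem exists_isSeparatingScheme {φ : H →* G}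
    (h : ∀ V, IsOpen V → 1 ∈ V → ∃ V' ∈ 𝓝 (1 : H), V' ⊆ V ∧ φ '' V' ≠ φ '' V) :
    ∃ K x, IsSeparatingScheme φ K x := by
  let C := {K : Set H // K ∈ 𝓝 1 ∧ IsCompact K ∧ IsClosed K}
  have step : ∀ K : C, ∃ (x : H) (K' : C),
      K'.1 ⊆ K.1 ∧ x • K'.1 ⊆ K.1 ∧ φ x ∉ φ '' (K'.1 / K'.1) := fun K => by
    obtain ⟨x, K', hK', hK'c, hK'cl, hsub⟩ :=
      exists_separating_step (h _ isOpen_interior (mem_interior_iff_mem_nhds.mpr K.2.1))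
    exact ⟨x, ⟨K', hK', hK'c, hK'cl⟩, hsub⟩
  choose x next hnext using step
  obtain ⟨K₀, hK₀⟩ := exists_mem_nhds_isCompact_isClosed (1 : H)
  let K n := (next^[n] ⟨K₀, hK₀⟩).1
  have hK_succ n : K (n + 1) = (next (next^[n] ⟨K₀, hK₀⟩)).1 :=
    congrArg Subtype.val (Function.iterate_succ_apply' _ _ _)
  refine ⟨K, fun n => x (next^[n] ⟨K₀, hK₀⟩), ⟨fun n => (next^[n] _).2.2.1,
    fun n => (next^[n] _).2.2.2, fun n => mem_of_mem_nhds (next^[n] _).2.1,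
    fun n => ?_, fun n => ?_, fun n => ?_⟩⟩ <;> rw [hK_succ]
  exacts [(hnext _).1, (hnext _).2.1, (hnext _).2.2]

end CantorScheme

theorem exists_stable_image_nhds_of_locallyCompact_general
    {H : Type*} [Group H] [TopologicalSpace H] [IsTopologicalGroup H]
    [LocallyCompactSpace H]
    {G : Type*} [Group G] (hcard : Cardinal.mk G < 2 ^ Cardinal.aleph0)
    (φ : H →* G) :
    ∃ V : Set H, IsOpen V ∧ (1 : H) ∈ V ∧
      ∀ V' ∈ nhds (1 : H), V' ⊆ V → φ '' V' = φ '' V := by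
  by_contra! h
  obtain ⟨K, x, hS⟩ := exists_isSeparatingScheme h
  obtain ⟨f, hf⟩ := hS.exists_injective
  exact (two_pow_aleph0_le_mk_of_injective hf).not_gt hcard

/-- If `H` is a locally compact Hausdorff topological group, `G` a group of
cardinality `< 2 ^ ℵ₀` and `φ : H →* G` a (not necessarily continuous)
homomorphism, then there is an open neighborhood `V` of `1` such that
`φ '' V' = φ '' V` for every neighborhood `V' ⊆ V` of `1`. -/
theorem exists_stable_image_nhds_of_locallyCompact
    {H : Type*} [Group H] [TopologicalSpace H] [IsTopologicalGroup H]
    [LocallyCompactSpace H] [T2Space H]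
    {G : Type*} [Group G] (hcard : Cardinal.mk G < 2 ^ Cardinal.aleph0)
    (φ : H →* G) :
    ∃ V : Set H, IsOpen V ∧ (1 : H) ∈ V ∧
      ∀ V' ∈ nhds (1 : H), V' ⊆ V → φ '' V' = φ '' V :=
  exists_stable_image_nhds_of_locallyCompact_general hcard φ
end

section
/- Suppose V is an open neighborhood of 1_H in a topological group H and φ : H → G is a group homomorphism such that φ(V') = φ(V) for every neighborhood V' of 1_H contained in V. Then φ(V) is a subgroup of G. -/
/-!
Closure of `φ '' V` under `(a, b) ↦ a * b⁻¹` comes from shrinking `V` to a smaller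
neighbourhood of `1` without changing its image. Given `x ∈ V`, the set
`{w ∈ V | x * w⁻¹ ∈ V}` is such a neighbourhood, because `V` is open at `x`; so every element of `φ '' V` is `φ w` with `x * w⁻¹ ∈ V`, and then
`φ x * (φ w)⁻¹ = φ (x * w⁻¹) ∈ φ '' V`.
-/

open Topology

theorem mul_inv_preimage_mem_nhds_one {H : Type*} [Group H] [TopologicalSpace H]
    [IsTopologicalGroup H] {x : H} {s : Set H} (hs : s ∈ 𝓝 x) :
    (fun w => x * w⁻¹) ⁻¹' s ∈ 𝓝 (1 : H) :=
  (continuous_const.mul continuous_inv).continuousAt.preimage_mem_nhds (by simpa using hs)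

theorem MonoidHom.exists_subgroup_coe_eq_image {H G : Type*} [Group H] [Group G]
    (φ : H →* G) {V : Set H} (hne : V.Nonempty)
    (hsub : ∀ x ∈ V, φ '' V ⊆ φ '' ((fun w => x * w⁻¹) ⁻¹' V)) :
    ∃ S : Subgroup G, (S : Set G) = φ '' V := by
  refine ⟨Subgroup.ofDiv (φ '' V) (hne.image φ) ?_, rfl⟩
  rintro _ ⟨x, hx, rfl⟩ b hb
  obtain ⟨w, hw, rfl⟩ := hsub x hx hb
  exact ⟨x * w⁻¹, hw, by simp⟩

/-- If `V` is an open neighborhood of `1` in a topological group `H` and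
`φ : H →* G` satisfies `φ '' V' = φ '' V` for every neighborhood `V' ⊆ V` of `1`,
then `φ '' V` is a subgroup of `G`. -/
theorem image_isSubgroup_of_stable
    {H : Type*} [Group H] [TopologicalSpace H] [IsTopologicalGroup H]
    {G : Type*} [Group G] (φ : H →* G)
    (V : Set H) (hV : IsOpen V) (h1 : (1 : H) ∈ V)
    (hstable : ∀ V' ∈ nhds (1 : H), V' ⊆ V → φ '' V' = φ '' V) :
    ∃ S : Subgroup G, (S : Set G) = φ '' V := by
  refine φ.exists_subgroup_coe_eq_image ⟨1, h1⟩ fun x hx => ?_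
  have hnhds : V ∩ (fun w => x * w⁻¹) ⁻¹' V ∈ 𝓝 (1 : H) :=
    Filter.inter_mem (hV.mem_nhds h1) (mul_inv_preimage_mem_nhds_one (hV.mem_nhds hx))
  rw [← hstable _ hnhds Set.inter_subset_left]
  exact Set.image_mono Set.inter_subset_right
end

section
/- A group that is an extension of a cm-slender group by a cm-slender group is cm-slender. That is, if 1 → K → G → Q → 1 is a short exact sequence of groups with K and Q cm-slender, then G is cm-slender. -/
universe u

/-- A group `G` is cm-slender if every group homomorphism from a completely
metrizable topological group to `G` has open kernel. -/
def IsCMSlender (G : Type*) [Group G] : Prop :=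
  ∀ (H : Type u) [Group H] [tH : TopologicalSpace H] [IsTopologicalGroup H],
    (∃ mH : MetricSpace H,
      mH.toUniformSpace.toTopologicalSpace = tH ∧ @CompleteSpace H mH.toUniformSpace) →
    ∀ φ : H →* G, IsOpen ((φ : H → G) ⁻¹' {1})

/-!
Let `φ : H →* G` with `H` completely metrizable. Since `Q` is cm-slender, `N = ker (q ∘ φ)` is an
open, hence closed, hence completely metrizable subgroup of `H`, and `φ` maps `N` into
`ker q = ι(K) ≅ K`. Since `K` is cm-slender, the kernel of `φ|_N` is open in `N`, so open in `H`.
-/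

namespace IsCMSlender

variable {G K Q : Type*} [Group G] [Group K] [Group Q]

theorem isOpen_ker (hG : IsCMSlender.{u} G) {H : Type u} [Group H] [MetricSpace H]
    [CompleteSpace H] [IsTopologicalGroup H] (φ : H →* G) : IsOpen (φ.ker : Set H) := by
  rw [MonoidHom.coe_ker]
  exact hG H ⟨‹MetricSpace H›, rfl, ‹_›⟩ φ

theorem of_isOpen_ker
    (h : ∀ (H : Type u) [Group H] [MetricSpace H] [CompleteSpace H] [IsTopologicalGroup H]
      (φ : H →* G), IsOpen (φ.ker : Set H)) :
    IsCMSlender.{u} G := by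
  rintro H _ _ _ ⟨_, rfl, _⟩ φ
  exact h H φ

theorem of_injective (f : G →* K) (hf : Function.Injective f) (hK : IsCMSlender.{u} K) :
    IsCMSlender.{u} G :=
  of_isOpen_ker fun H _ _ _ _ φ => by
    simpa only [MonoidHom.ker_comp_of_injective _ _ hf] using hK.isOpen_ker (f.comp φ)

theorem of_ker (q : G →* Q) (hker : IsCMSlender.{u} q.ker) (hQ : IsCMSlender.{u} Q) :
    IsCMSlender.{u} G := by
  refine of_isOpen_ker fun H _ _ _ _ φ => ?_
  set N := (q.comp φ).ker
  have hN : IsOpen (N : Set H) := hQ.isOpen_ker (q.comp φ)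
  have : CompleteSpace N := (N.isClosed_of_isOpen hN).completeSpace_coe
  let ψ : N →* q.ker := (φ.comp N.subtype).codRestrict q.ker fun n => n.2
  have hker_eq : (φ.ker : Set H) = Subtype.val '' (ψ.ker : Set N) := by
    ext h
    constructor
    · intro hh
      have hhN : h ∈ N := by
        rw [MonoidHom.mem_ker, MonoidHom.comp_apply, MonoidHom.mem_ker.mp hh, map_one]
      exact ⟨⟨h, hhN⟩, Subtype.ext hh, rfl⟩
    · rintro ⟨n, hn, rfl⟩
      exact congrArg Subtype.val hn
  rw [hker_eq]
  exact hN.isOpenMap_subtype_val _ (hker.isOpen_ker ψ)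

end IsCMSlender

theorem isCMSlender_of_extension_general
    {K G Q : Type*} [Group K] [Group G] [Group Q]
    (ι : K →* G) (q : G →* Q)
    (hι : Function.Injective ι)
    (hexact : ι.range = q.ker)
    (hK : IsCMSlender.{u} K) (hQ : IsCMSlender.{u} Q) :
    IsCMSlender.{u} G := by
  let e : q.ker ≃* K := (MulEquiv.subgroupCongr hexact.symm).trans (MonoidHom.ofInjective hι).symm
  exact .of_ker q (.of_injective e.toMonoidHom e.injective hK) hQ

/-- An extension of a cm-slender group by a cm-slender group is cm-slender. -/
theorem isCMSlender_of_extension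
    {K G Q : Type*} [Group K] [Group G] [Group Q]
    (ι : K →* G) (q : G →* Q)
    (hι : Function.Injective ι) (hq : Function.Surjective q)
    (hexact : ι.range = q.ker)
    (hK : IsCMSlender.{u} K) (hQ : IsCMSlender.{u} Q) :
    IsCMSlender.{u} G :=
  isCMSlender_of_extension_general ι q hι hexact hK hQ
end

section
/- A group that is an extension of an lcH-slender group by an lcH-slender group is lcH-slender. -/
universe u

/-- A group `G` is lcH-slender if every group homomorphism from a locally compact
Hausdorff topological group to `G` has open kernel. -/
def IsLCHSlender (G : Type*) [Group G] : Prop :=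
  ∀ (H : Type u) [Group H] [TopologicalSpace H] [IsTopologicalGroup H]
    [LocallyCompactSpace H] [T2Space H],
    ∀ φ : H →* G, IsOpen ((φ : H → G) ⁻¹' {1})

/-!
Let `φ : H → G` with `H` locally compact Hausdorff. Since `Q` is lcH-slender, `N = ker (q ∘ φ)`
is an open, hence locally compact, subgroup of `H`, and `φ` maps `N` into `ker q = ι K ≅ K`.
Since `K` is lcH-slender, `ker φ ∩ N` is open in `N`, hence in `H`, and a subgroup containing
an open subgroup is open.
-/

section

variable {H : Type u} [Group H] [TopologicalSpace H] [IsTopologicalGroup H]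

theorem IsLCHSlender.isOpen_ker {G : Type*} [Group G] (hG : IsLCHSlender.{u} G)
    [LocallyCompactSpace H] [T2Space H] (φ : H →* G) : IsOpen (φ.ker : Set H) := by
  rw [MonoidHom.coe_ker]
  exact hG H φ

theorem IsLCHSlender.isOpen_ker_of_range_le {K G : Type*} [Group K] [Group G]
    (hK : IsLCHSlender.{u} K) {ι : K →* G} (hι : Function.Injective ι)
    [LocallyCompactSpace H] [T2Space H] (φ : H →* G) (hφ : φ.range ≤ ι.range) :
    IsOpen (φ.ker : Set H) := by
  let ψ : H →* K := ((MonoidHom.ofInjective hι).symm : ι.range →* K).comp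
    (φ.codRestrict ι.range fun x => hφ ⟨x, rfl⟩)
  have hψ : ψ.ker = φ.ker := by
    rw [MonoidHom.ker_mulEquiv_comp, MonoidHom.ker_codRestrict]
  exact hψ ▸ hK.isOpen_ker ψ

theorem MonoidHom.isOpen_ker_of_isOpen_ker_domRestrict {G : Type*} [Group G] {N : Subgroup H}
    (hN : IsOpen (N : Set H)) (φ : H →* G) (hφN : IsOpen ((φ.domRestrict N).ker : Set N)) :
    IsOpen (φ.ker : Set H) := by
  refine Subgroup.isOpen_mono (H₁ := (φ.domRestrict N).ker.map N.subtype) ?_ ?_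
  · rintro _ ⟨x, hx, rfl⟩
    exact hx
  · rw [Subgroup.coe_map]
    exact hN.isOpenMap_subtype_val _ hφN

end

theorem isLCHSlender_of_extension_general
    {K G Q : Type*} [Group K] [Group G] [Group Q]
    (ι : K →* G) (q : G →* Q)
    (hι : Function.Injective ι)
    (hexact : ι.range = q.ker)
    (hK : IsLCHSlender.{u} K) (hQ : IsLCHSlender.{u} Q) :
    IsLCHSlender.{u} G := by
  intro H _ _ _ _ _ φ
  let N := (q.comp φ).ker
  have hN : IsOpen (N : Set H) := hQ.isOpen_ker (q.comp φ)
  have : LocallyCompactSpace N := hN.locallyCompactSpace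
  have hrange : (φ.domRestrict N).range ≤ ι.range := by
    rintro _ ⟨x, rfl⟩
    rw [hexact]
    exact x.2
  rw [← MonoidHom.coe_ker]
  exact φ.isOpen_ker_of_isOpen_ker_domRestrict hN (hK.isOpen_ker_of_range_le hι _ hrange)

/-- An extension of an lcH-slender group by an lcH-slender group is lcH-slender. -/
theorem isLCHSlender_of_extension
    {K G Q : Type*} [Group K] [Group G] [Group Q]
    (ι : K →* G) (q : G →* Q)
    (hι : Function.Injective ι) (hq : Function.Surjective q)
    (hexact : ι.range = q.ker)
    (hK : IsLCHSlender.{u} K) (hQ : IsLCHSlender.{u} Q) :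
    IsLCHSlender.{u} G :=
  isLCHSlender_of_extension_general ι q hι hexact hK hQ
end

section
/- If G is a group with a limiting sequence pair, then G is cm-slender: every group homomorphism from a completely metrizable topological group to G has open kernel. -/
/-!
Suppose `φ : H →* G` has a kernel that is not open, so elements outside the kernel accumulate at `1`.
Choosing such elements `h n` close enough to `1`, and exponent indices `c n` one at a time, completeness
of `H` produces the convergent infinite nested words `w n = (h n * w (n + 1)) ^ k (c n)`. In `G` the
translation property of `F` gives `φ (w n) ∈ F (N n)` for indices `N n` that are computable from the
earlier choices once `N 0` is known. As `N 0` is not known when `c n` is chosen, `c n` dominates the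
index obtained from every starting value `ν ≤ n`; then `c n ≥ N n` for `n ≥ N 0`, and the root
property of `F` forces `φ (h n) * φ (w (n + 1)) = 1` for all such `n`, whence `φ (h (N 0)) = 1`.
-/

universe u

open Filter Topology

section InfiniteComposition

variable {X α : Type*} [MetricSpace X] {T : α → X → X}

theorem continuous_foldr (hT : ∀ a, Continuous (T a)) (l : List α) :
    Continuous fun x => l.foldr T x := by
  induction l with
  | nil => exact continuous_id
  | cons a l ih => exact (hT a).comp ih

theorem exists_forall_tails_dist_foldr_lt (hT : ∀ a, Continuous (T a)) {y : X} {P : α → Prop}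
    (hP : ∀ U ∈ 𝓝 y, ∃ a, P a ∧ T a y ∈ U) (l : List α) {ε : ℝ} (hε : 0 < ε) :
    ∃ a, P a ∧ ∀ s ∈ l.tails, dist (s.foldr T (T a y)) (s.foldr T y) < ε := by
  have hnear : ∀ᶠ x in 𝓝 y, ∀ s ∈ l.tails, dist (s.foldr T x) (s.foldr T y) < ε :=
    l.tails.finite_toSet.eventually_all.2 fun s _ =>
      (continuous_foldr hT s).continuousAt.eventually (Metric.ball_mem_nhds _ hε)
  exact hP _ hnear

theorem exists_seq_eq_apply_succ [CompleteSpace X] (hT : ∀ a, Continuous (T a)) (y : X)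
    (P : List α → α → Prop) (hP : ∀ l, ∀ U ∈ 𝓝 y, ∃ a, P l a ∧ T a y ∈ U) :
    ∃ (a : ℕ → α) (w : ℕ → X), (∀ n, P ((List.range n).map a) (a n)) ∧
      ∀ n, w n = T (a n) (w (n + 1)) := by
  choose next hnext using fun l =>
    exists_forall_tails_dist_foldr_lt hT (hP l) l (pow_pos (half_pos one_pos) l.length)
  let hist : ℕ → List α := fun n => Nat.rec [] (fun _ l => l ++ [next l]) n
  set a : ℕ → α := fun n => next (hist n)
  have hist_eq : ∀ n, hist n = (List.range n).map a := by
    intro n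
    induction n with
    | zero => rfl
    | succ n ih => rw [List.range_succ, List.map_append, ← ih]; rfl
  -- `Q n m` is the composition of `T (a n), …, T (a (n + m - 1))`, applied to `y`.
  let Q : ℕ → ℕ → X := fun n m => ((List.range' n m).map a).foldr T y
  have hQ_succ : ∀ n m, Q n (m + 1) = T (a n) (Q (n + 1) m) := by
    simp [Q, List.range'_succ]
  have hQ_dist : ∀ n m, dist (Q n m) (Q n (m + 1)) ≤ (1 / 2) ^ n * (1 / 2) ^ m := by
    intro n m
    have hsuffix : (List.range' n m).map a ∈ (hist (n + m)).tails := by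
      have := List.drop_suffix n (List.range' 0 (n + m))
      rw [List.drop_range'] at this
      rw [List.mem_tails, hist_eq, List.range_eq_range']
      simpa using this.map a
    have hlen : (hist (n + m)).length = n + m := by simp [hist_eq]
    have := (hnext (hist (n + m))).2 _ hsuffix
    rw [dist_comm, ← pow_add, ← hlen]
    simpa [Q, List.range'_concat, List.foldr_append] using this.le
  choose w hw using fun n =>
    cauchySeq_tendsto_of_complete (cauchySeq_of_le_geometric _ _ (by norm_num) (hQ_dist n))
  refine ⟨a, w, fun n => hist_eq n ▸ (hnext (hist n)).1, fun n => ?_⟩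
  refine tendsto_nhds_unique ((hw n).comp (tendsto_add_atTop_nat 1)) ?_
  simpa [Function.comp_def, hQ_succ] using ((hT (a n)).tendsto _).comp (hw (n + 1))

end InfiniteComposition

section IndexBound

variable {G : Type*} [Group G]

def nextIndex (τ : ℕ → G → ℕ) (m : ℕ) (p : G × ℕ) : ℕ :=
  τ (max m p.2) p.1⁻¹

def indexBound (τ : ℕ → G → ℕ) (l : List (G × ℕ)) : ℕ :=
  (Finset.range (l.length + 1)).sup fun ν => l.foldl (nextIndex τ) ν

theorem foldl_nextIndex_le_indexBound (τ : ℕ → G → ℕ) (l : List (G × ℕ)) {ν : ℕ}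
    (hν : ν ≤ l.length) : l.foldl (nextIndex τ) ν ≤ indexBound τ l :=
  Finset.le_sup (f := fun ν => l.foldl (nextIndex τ) ν) (Finset.mem_range_succ_iff.2 hν)

end IndexBound

namespace IsLimitingSequencePair

variable {G : Type*} [Group G] {F : ℕ → Set G} {k : ℕ → ℕ}

theorem one_mem (hF : IsLimitingSequencePair F k) (n : ℕ) : (1 : G) ∈ F n := by
  have h1 : (1 : G) ∈ {g : G | g ^ k n ∈ F n} := by rw [hF.2.2.1 n]; rfl
  simpa using h1

theorem eq_one_of_pow_mem (hF : IsLimitingSequencePair F k) {g : G} {n : ℕ}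
    (h : g ^ k n ∈ F n) : g = 1 := by
  have hg : g ∈ {g : G | g ^ k n ∈ F n} := h
  rwa [hF.2.2.1 n] at hg

theorem mem_nextIndex (hF : IsLimitingSequencePair F k) {τ : ℕ → G → ℕ}
    (hτ : ∀ n g, (fun x => g * x) '' F n ⊆ F (τ n g)) {m c : ℕ} {g v : G}
    (h : (g * v) ^ k c ∈ F m) : v ∈ F (nextIndex τ m (g, c)) := by
  have hgv : g * v ∈ F (max m c) := hF.2.2.2 c _ (le_max_right m c) (hF.1 (le_max_left m c) h)
  exact hτ _ _ ⟨g * v, hgv, inv_mul_cancel_left g v⟩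

theorem exists_eq_one_of_eq_pow (hF : IsLimitingSequencePair F k) {τ : ℕ → G → ℕ}
    (hτ : ∀ n g, (fun x => g * x) '' F n ⊆ F (τ n g)) (g u : ℕ → G) (c : ℕ → ℕ)
    (hu : ∀ n, u n = (g n * u (n + 1)) ^ k (c n))
    (hc : ∀ n, indexBound τ ((List.range n).map fun j => (g j, c j)) ≤ c n) :
    ∃ n, g n = 1 := by
  set ν := τ 0 (u 0)
  let N : ℕ → ℕ := fun n => ((List.range n).map fun j => (g j, c j)).foldl (nextIndex τ) ν
  have hmem : ∀ n, u n ∈ F (N n) := by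
    intro n
    induction n with
    | zero => exact hτ 0 (u 0) ⟨1, hF.one_mem 0, mul_one _⟩
    | succ n ih =>
      have hN : N (n + 1) = nextIndex τ (N n) (g n, c n) := by simp [N, List.range_succ]
      rw [hN]
      exact hF.mem_nextIndex hτ (hu n ▸ ih)
  have hkill : ∀ n, ν ≤ n → g n * u (n + 1) = 1 := fun n hn =>
    hF.eq_one_of_pow_mem <| hu n ▸ hF.1
      ((foldl_nextIndex_le_indexBound τ _ (by simpa using hn)).trans (hc n)) (hmem n)
  have hu_succ : u (ν + 1) = 1 := by rw [hu, hkill _ (by omega), one_pow]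
  exact ⟨ν, by simpa [hu_succ] using hkill ν le_rfl⟩

end IsLimitingSequencePair

theorem MonoidHom.frequently_ne_one_of_not_isOpen {H M : Type*} [Group H] [TopologicalSpace H]
    [SeparatelyContinuousMul H] [MulOneClass M] (φ : H →* M) (h : ¬IsOpen (φ ⁻¹' {1})) :
    ∃ᶠ x in 𝓝 1, φ x ≠ 1 := by
  intro hker
  have hnhds : (φ.ker : Set H) ∈ 𝓝 1 := hker.mono fun x hx => φ.mem_ker.2 (not_not.1 hx)
  exact h (φ.coe_ker ▸ φ.ker.isOpen_of_mem_nhds hnhds)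

/-- A group with a limiting sequence pair is cm-slender. -/
theorem isCMSlender_of_limitingSequencePair
    {G : Type*} [Group G]
    (h : ∃ (F : ℕ → Set G) (k : ℕ → ℕ), IsLimitingSequencePair F k) :
    IsCMSlender.{u} G := by
  obtain ⟨F, k, hF⟩ := h
  choose τ hτ using hF.2.1
  intro H _ _ _ ⟨mH, htop, hcomplete⟩ φ
  subst htop
  by_contra hker
  have hφ := φ.frequently_ne_one_of_not_isOpen hker
  obtain ⟨a, w, ha, hw⟩ := exists_seq_eq_apply_succ (T := fun (p : H × ℕ) y => (p.1 * y) ^ k p.2)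
    (fun p => (continuous_const.mul continuous_id).pow _) 1
    (fun l p => φ p.1 ≠ 1 ∧ indexBound τ (l.map fun q => (φ q.1, q.2)) ≤ p.2)
    fun l U hU => by
      set c := indexBound τ (l.map fun q => (φ q.1, q.2))
      obtain ⟨x, hx, hxU⟩ :=
        (hφ.and_eventually ((continuous_pow (k c)).tendsto' 1 1 (one_pow _) hU)).exists
      exact ⟨(x, c), ⟨hx, le_rfl⟩, by simpa using hxU⟩
  obtain ⟨n, hn⟩ := hF.exists_eq_one_of_eq_pow hτ (fun n => φ (a n).1) (fun n => φ (w n))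
    (fun n => (a n).2) (fun n => by rw [hw n, map_pow, map_mul])
    (fun n => by simpa [List.map_map, Function.comp_def] using (ha n).2)
  exact (ha n).1 hn
end

section
/- If G is a direct sum of cm-slender groups, i.e., G = ⊕_{i∈I} G_i with each G_i cm-slender, then G is cm-slender. -/
/-!
The kernel of `φ : H →* ⊕ᵢ Gᵢ` is the intersection of the open subgroups
`Kᵢ = ker (πᵢ ∘ φ)`, and every `x : H` lies in all but finitely many `Kᵢ`. If that
intersection were not open, every neighbourhood of `1` would contain an element lying in any
prescribed finitely many `Kᵢ` but outside a further `Kⱼ`. Multiplying such elements, ever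
closer to `1`, yields a Cauchy sequence `pₙ` whose sets of escaped indices `{i | pₙ ∉ Kᵢ}`
strictly increase; as the `Kᵢ` are closed, each escaped index persists in the limit, which
therefore lies outside infinitely many `Kᵢ`.
-/

universe u

/-- The direct sum (restricted direct product) `⊕_{i ∈ I} G i` of groups, as the
subgroup of the product consisting of elements with finite support. -/
def directSumSubgroup {I : Type*} (G : I → Type*) [∀ i, Group (G i)] :
    Subgroup (∀ i, G i) where
  carrier := {f | {i : I | f i ≠ 1}.Finite}
  one_mem' := by
    simp
  mul_mem' := by
    intro a b ha hb
    refine (ha.union hb).subset ?_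
    intro i hi
    simp only [Set.mem_setOf_eq, Pi.mul_apply] at hi
    by_contra hc
    simp only [Set.mem_union, Set.mem_setOf_eq, not_or, not_not] at hc
    rw [hc.1, hc.2, one_mul] at hi
    exact hi rfl
  inv_mem' := by
    intro a ha
    refine ha.subset ?_
    intro i hi
    simp only [Set.mem_setOf_eq, Pi.inv_apply] at hi
    simp only [Set.mem_setOf_eq]
    intro hc
    rw [hc] at hi
    exact hi inv_one

open Filter Topology TopologicalSpace

section SubgroupFamily

variable {H I : Type*} [Group H] {K : I → Subgroup H}

theorem exists_mem_escaping_of_not_isOpen_iInter [TopologicalSpace H]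
    [SeparatelyContinuousMul H]
    (hK : ∀ i, IsOpen (K i : Set H)) (hK' : ¬ IsOpen (⋂ i, (K i : Set H)))
    {U : Set H} (hU : U ∈ 𝓝 1) {F : Set I} (hF : F.Finite) :
    ∃ g ∈ U, (∀ i ∈ F, g ∈ K i) ∧ ∃ j ∉ F, g ∉ K j := by
  by_contra! hcon
  refine hK' ?_
  have hnhds : U ∩ ⋂ i ∈ F, (K i : Set H) ∈ 𝓝 1 :=
    inter_mem hU <| (biInter_mem hF).2 fun i _ => (hK i).mem_nhds (K i).one_mem
  have hsub : U ∩ ⋂ i ∈ F, (K i : Set H) ⊆ ((⨅ i, K i : Subgroup H) : Set H) := by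
    rintro g ⟨hgU, hgF⟩
    rw [Set.mem_iInter₂] at hgF
    rw [Subgroup.coe_iInf, Set.mem_iInter]
    intro i
    by_cases hi : i ∈ F
    · exact hgF i hi
    · exact hcon g hgU hgF i hi
  simpa only [Subgroup.coe_iInf] using
    (⨅ i, K i).isOpen_of_mem_nhds (mem_of_superset hnhds hsub)

variable {p : ℕ → H}

theorem inv_mul_mem_of_le_of_notMem
    (hstep : ∀ n i, p n ∉ K i → (p n)⁻¹ * p (n + 1) ∈ K i) {n m : ℕ} (hnm : n ≤ m) {i : I} (hi : p n ∉ K i) :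
    (p n)⁻¹ * p m ∈ K i := by
  induction m, hnm using Nat.le_induction with
  | base => simp
  | succ m _ ih =>
    have hm : p m ∉ K i := fun hm => hi <| by simpa using mul_mem hm (inv_mem ih)
    simpa [mul_assoc] using mul_mem ih (hstep m i hm)

theorem notMem_of_le_of_notMem (hstep : ∀ n i, p n ∉ K i → (p n)⁻¹ * p (n + 1) ∈ K i)
    {n m : ℕ} (hnm : n ≤ m) {i : I} (hi : p n ∉ K i) :
    p m ∉ K i := fun hm =>
  hi <| by simpa using mul_mem hm (inv_mem (inv_mul_mem_of_le_of_notMem hstep hnm hi))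

theorem infinite_setOf_notMem_of_tendsto [TopologicalSpace H] [SeparatelyContinuousMul H]
    (hstep : ∀ n i, p n ∉ K i → (p n)⁻¹ * p (n + 1) ∈ K i)
    (hK : ∀ i, IsClosed (K i : Set H)) {y : H} (hy : Tendsto p atTop (𝓝 y))
    (hnew : ∀ n, ∃ j, p n ∈ K j ∧ p (n + 1) ∉ K j) : {i | y ∉ K i}.Infinite := by
  choose j hj_mem hj_not_mem using hnew
  have hlim : ∀ n i, p n ∉ K i → y ∉ K i := by
    intro n i hi hyi
    have hclosed : IsClosed {x | (p n)⁻¹ * x ∈ K i} :=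
      (hK i).preimage (continuous_const_mul _)
    have : (p n)⁻¹ * y ∈ K i := hclosed.mem_of_tendsto hy <|
      eventually_atTop.2 ⟨n, fun m hm => inv_mul_mem_of_le_of_notMem hstep hm hi⟩
    exact hi <| by simpa using mul_mem hyi (inv_mem this)
  have hj_lt : ∀ a b, a < b → j a ≠ j b := fun a b hab hj =>
    notMem_of_le_of_notMem hstep hab (hj_not_mem a) (hj ▸ hj_mem b)
  have hj_inj : Function.Injective j := fun a b hab => by
    by_contra hne
    rcases Nat.lt_or_gt_of_ne hne with h | h
    · exact hj_lt a b h hab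
    · exact hj_lt b a h hab.symm
  exact Set.infinite_of_injective_forall_mem hj_inj fun n => hlim (n + 1) (j n) (hj_not_mem n)

end SubgroupFamily

theorem isOpen_iInter_of_finite_setOf_notMem {H I : Type*} [Group H] [TopologicalSpace H]
    [SeparatelyContinuousMul H] [IsCompletelyMetrizableSpace H] {K : I → Subgroup H}
    (hK : ∀ i, IsOpen (K i : Set H)) (hfin : ∀ x, {i | x ∉ K i}.Finite) :
    IsOpen (⋂ i, (K i : Set H)) := by
  let := upgradeIsCompletelyMetrizable H
  by_contra hK'
  have hstep : ∀ (n : ℕ) (x : H), ∃ g, dist (x * g) x < (1 / 2 : ℝ) ^ n ∧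
      (∀ i, x ∉ K i → g ∈ K i) ∧ ∃ j, x ∈ K j ∧ x * g ∉ K j := by
    intro n x
    have hU : {g | dist (x * g) x < (1 / 2 : ℝ) ^ n} ∈ 𝓝 (1 : H) :=
      (isOpen_lt ((continuous_const_mul x).dist continuous_const) continuous_const).mem_nhds
        (by simp)
    obtain ⟨g, hgU, hgF, j, hxj, hgj⟩ :=
      exists_mem_escaping_of_not_isOpen_iInter hK hK' hU (hfin x)
    have hxj : x ∈ K j := not_not.1 hxj
    exact ⟨g, hgU, hgF, j, hxj, fun hxg => hgj (((K j).mul_mem_cancel_left hxj).1 hxg)⟩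
  choose g hg_dist hg_mem hg_new using hstep
  let p : ℕ → H := fun n => Nat.rec 1 (fun m x => x * g m x) n
  obtain ⟨y, hy⟩ := cauchySeq_tendsto_of_complete <|
    cauchySeq_of_le_geometric (f := p) (1 / 2) 1 (by norm_num) fun n => by
      rw [dist_comm, one_mul]; exact (hg_dist n (p n)).le
  refine infinite_setOf_notMem_of_tendsto (p := p) (fun n i hi => ?_)
    (fun i => (K i).isClosed_of_isOpen (hK i)) hy (fun n => hg_new n (p n)) (hfin y)
  simpa [p] using hg_mem n (p n) i hi

/-- A direct sum of cm-slender groups is cm-slender. -/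
theorem isCMSlender_directSum
    {I : Type*} (G : I → Type*) [∀ i, Group (G i)]
    (h : ∀ i, IsCMSlender.{u} (G i)) :
    IsCMSlender.{u} (directSumSubgroup G) := by
  intro H _ _ _ hmet φ
  have : IsCompletelyMetrizableSpace H := ⟨hmet⟩
  let ψ i : H →* G i := (Pi.evalMonoidHom G i).comp ((directSumSubgroup G).subtype.comp φ)
  have hker : (φ : H → directSumSubgroup G) ⁻¹' {1} = ⋂ i, ((ψ i).ker : Set H) := by
    ext x
    simp only [Set.mem_preimage, Set.mem_singleton_iff, Set.mem_iInter, SetLike.mem_coe,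
      MonoidHom.mem_ker, Subtype.ext_iff, funext_iff]
    rfl
  rw [hker]
  exact isOpen_iInter_of_finite_setOf_notMem (fun i => h i H hmet (ψ i)) fun x => (φ x).2
end

section
/- No cm-slender group contains an element of finite order other than the identity, and no cm-slender group contains a subgroup isomorphic to ℚ. -/
/-!
Both parts exhibit a homomorphism with non-open kernel from a completely metrizable group into
`G`. Since an open subgroup is also closed, such a kernel cannot be open if it is dense, or if the
domain is connected and the kernel is proper. For `ℚ ≤ G`, we compose with a `ℚ`-linear
functional `ℝ → ℚ` that is nonzero at `1`. For an element `g` of prime order `p`, we compose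
`k ↦ g ^ k` with a functional on the compact group `ℕ → ZMod p` that vanishes on the dense
subgroup of finitely supported sequences but not on the constant sequence `1`; such a functional
exists by linear algebra over the field `ZMod p`.
-/

universe u

open Topology Filter TopologicalSpace

theorem dense_setOf_support_finite (ι M : Type*) [Zero M] [TopologicalSpace M] :
    Dense {x : ι → M | x.support.Finite} := by
  intro x
  have hlim : Tendsto (fun s : Finset ι => (s : Set ι).indicator x) atTop (𝓝 x) := by
    refine tendsto_pi_nhds.2 fun i => tendsto_const_nhds.congr' ?_
    filter_upwards [eventually_ge_atTop {i}] with s hs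
    simp [Set.indicator_of_mem (Finset.singleton_subset_iff.1 hs)]
  exact mem_closure_of_tendsto hlim (Eventually.of_forall fun s =>
    s.finite_toSet.subset Set.support_indicator_subset)

theorem exists_dual_apply_one_eq_one_of_infinite (K ι : Type*) [Field K] [Infinite ι] :
    ∃ f : Module.Dual K (ι → K), f 1 = 1 ∧ ∀ x : ι → K, x.support.Finite → f x = 0 := by
  let W := LinearMap.range (Finsupp.lcoeFun : (ι →₀ K) →ₗ[K] ι → K)
  have h1 : (1 : ι → K) ∉ W := by
    rintro ⟨x, hx⟩
    have hfin : (Function.support (1 : ι → K)).Finite := hx ▸ x.hasFiniteSupport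
    exact Set.infinite_univ (Function.support_one K ▸ hfin)
  obtain ⟨f, hf1, hfW⟩ := W.exists_dual_map_eq_bot_of_notMem h1 inferInstance
  refine ⟨(f 1)⁻¹ • f, inv_mul_cancel₀ hf1, fun x hx => ?_⟩
  have hx : f x = 0 := LinearMap.le_ker_iff_map.2 hfW ⟨Finsupp.ofSupportFinite x hx, rfl⟩
  simp [hx]

theorem exists_zmod_orderOf_addMonoidHom_apply_one {G : Type*} [Group G] (g : G) :
    ∃ χ : ZMod (orderOf g) →+ Additive G, χ 1 = Additive.ofMul g := by
  refine ⟨ZMod.lift _ ⟨zmultiplesHom _ (Additive.ofMul g), ?_⟩, ?_⟩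
  · simp [← ofMul_pow, pow_orderOf_eq_one]
  · rw [show (1 : ZMod (orderOf g)) = ((1 : ℤ) : ZMod (orderOf g)) by simp, ZMod.lift_coe]
    simp

namespace IsCMSlender

variable {G : Type*} [Group G]

section AddKer

variable {A : Type u} [AddGroup A] [TopologicalSpace A] [IsTopologicalAddGroup A]
  [IsCompletelyMetrizableSpace A]

theorem isClopen_addKer (hG : IsCMSlender.{u} G) (φ : A →+ Additive G) :
    IsClopen (φ.ker : Set A) := by
  have hopen : IsOpen (φ.ker : Set A) :=
    hG (Multiplicative A) (IsCompletelyMetrizableSpace.complete (X := A))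
      (AddMonoidHom.toMultiplicativeLeft φ)
  exact ⟨φ.ker.isClosed_of_isOpen hopen, hopen⟩

theorem eq_zero_of_connectedSpace [ConnectedSpace A] (hG : IsCMSlender.{u} G)
    (φ : A →+ Additive G) : φ = 0 :=
  AddMonoidHom.ker_eq_top_iff.1 <| SetLike.coe_injective <|
    (hG.isClopen_addKer φ).eq_univ ⟨0, φ.ker.zero_mem⟩

theorem eq_zero_of_dense_ker (hG : IsCMSlender.{u} G) (φ : A →+ Additive G)
    (hφ : Dense (φ.ker : Set A)) : φ = 0 :=
  AddMonoidHom.ker_eq_top_iff.1 <| SetLike.coe_injective <|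
    (hG.isClopen_addKer φ).isClosed.closure_eq.symm.trans hφ.closure_eq

end AddKer

theorem not_exists_injective_rat (hG : IsCMSlender.{0} G) :
    ¬ ∃ f : Multiplicative ℚ →* G, Function.Injective f := by
  rintro ⟨f, hf⟩
  obtain ⟨φ, hφ⟩ : ∃ φ : Module.Dual ℚ ℝ, φ 1 ≠ 0 :=
    Module.Projective.exists_dual_ne_zero ℚ one_ne_zero
  have hψ := hG.eq_zero_of_connectedSpace ((MonoidHom.toAdditiveLeft f).comp φ.toAddMonoidHom)
  have hf1 : f (Multiplicative.ofAdd (φ 1)) = 1 :=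
    congrArg Additive.toMul (DFunLike.congr_fun hψ 1)
  exact hφ (by simpa using hf (hf1.trans (map_one f).symm))

theorem not_prime_orderOf (hG : IsCMSlender.{0} G) (g : G) : ¬ (orderOf g).Prime := by
  intro hp
  have := Fact.mk hp
  obtain ⟨f, hf1, hfin⟩ := exists_dual_apply_one_eq_one_of_infinite (ZMod (orderOf g)) ℕ
  obtain ⟨χ, hχ⟩ := exists_zmod_orderOf_addMonoidHom_apply_one g
  let ψ := χ.comp f.toAddMonoidHom
  have hψ : ψ = 0 := hG.eq_zero_of_dense_ker ψ
    ((dense_setOf_support_finite ℕ _).mono fun x hx => by simp [ψ, hfin x hx])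
  have hg : Additive.ofMul g = 0 := by simpa [ψ, hf1, hχ] using DFunLike.congr_fun hψ 1
  exact hp.ne_one (orderOf_eq_one_iff.2 (by simpa using hg))

end IsCMSlender

/-- No cm-slender group has a nontrivial element of finite order, and no cm-slender
group contains a subgroup isomorphic to `ℚ`. -/
theorem cmSlender_torsionFree_and_no_rat
    {G : Type*} [Group G] (h : IsCMSlender.{0} G) :
    (∀ g : G, ∀ n : ℕ, 1 ≤ n → g ^ n = 1 → g = 1) ∧
    ¬ ∃ f : Multiplicative ℚ →* G, Function.Injective f := by
  refine ⟨fun g n hn hgn => ?_, h.not_exists_injective_rat⟩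
  by_contra hg
  have hord : orderOf g ≠ 0 :=
    (orderOf_pos_iff.2 (isOfFinOrder_iff_pow_eq_one.2 ⟨n, hn, hgn⟩)).ne'
  have hp := Nat.minFac_prime (mt orderOf_eq_one_iff.1 hg)
  exact h.not_prime_orderOf _ (orderOf_pow_orderOf_div hord (Nat.minFac_dvd _) ▸ hp)
end

section
/- Let G be a torsion-free group in which every element has finite centralizer-rank in the following sense: the centralizer of every nontrivial element is infinite cyclic, and G has unique root extraction. Then G has finite roots: for every g ∈ G the set {h ∈ G : h^n = g for some n ∈ ℕ} is finite. -/
/-- A torsion-free group with unique root extraction in which the centralizer of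
every nontrivial element is infinite cyclic has finite roots: every element has
only finitely many roots. -/
theorem finiteRoots_of_cyclicCentralizers
    {G : Type*} [Group G]
    (htf : ∀ g : G, ∀ n : ℕ, 1 ≤ n → g ^ n = 1 → g = 1)
    (huniq : ∀ (h h' : G) (n : ℕ), 1 ≤ n → h ^ n = h' ^ n → h = h')
    (hcent : ∀ g : G, g ≠ 1 → ∃ z : G, Subgroup.centralizer {g} = Subgroup.zpowers z) :
    ∀ g : G, {h : G | ∃ n : ℕ, 1 ≤ n ∧ h ^ n = g}.Finite := by
  intro g
  by_cases hg : g = 1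
  · subst hg
    apply Set.Finite.subset (Set.finite_singleton (1 : G))
    rintro h ⟨n, hn, hpow⟩
    exact htf h n hn hpow
  · obtain ⟨z, hz⟩ := hcent g hg
    -- g is a power of z
    have hgmem : g ∈ Subgroup.zpowers z := by
      rw [← hz]
      exact Subgroup.mem_centralizer_iff.mpr (by rintro x rfl; rfl)
    obtain ⟨m, hm⟩ := hgmem
    dsimp only at hm
    have hm0 : m ≠ 0 := by
      intro h0
      rw [h0, zpow_zero] at hm
      exact hg hm.symm
    have hz1 : z ≠ 1 := by
      intro h1
      rw [h1, one_zpow] at hm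
      exact hg hm.symm
    -- z^a = 1 implies a = 0
    have hzinj : ∀ a : ℤ, z ^ a = 1 → a = 0 := by
      intro a ha
      rcases lt_trichotomy a 0 with h | h | h
      · have h1 : z ^ (-a).toNat = 1 := by
          rw [← zpow_natCast, Int.toNat_of_nonneg (by omega), zpow_neg, ha, inv_one]
        exact absurd (htf z (-a).toNat (by omega) h1) hz1
      · exact h
      · have h1 : z ^ a.toNat = 1 := by
          rw [← zpow_natCast, Int.toNat_of_nonneg (by omega)]; exact ha
        exact absurd (htf z a.toNat (by omega) h1) hz1
    apply Set.Finite.subset ((Set.finite_Icc (-|m|) |m|).image (fun k => z ^ k))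
    rintro h ⟨n, hn, hpow⟩
    have hhmem : h ∈ Subgroup.zpowers z := by
      rw [← hz]
      apply Subgroup.mem_centralizer_iff.mpr
      rintro x rfl
      rw [← hpow]
      exact ((Commute.self_pow h n).symm).eq
    obtain ⟨k, hk⟩ := hhmem
    dsimp only at hk
    have hkey : k * n = m := by
      have heq : z ^ (k * (n : ℤ)) = z ^ m := by
        rw [zpow_mul, hk, zpow_natCast, hpow, hm]
      have := hzinj (k * (n : ℤ) - m) (by rw [zpow_sub, heq, mul_inv_cancel])
      omega
    refine ⟨k, ?_, hk⟩
    simp only [Set.mem_Icc]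
    have habs : |k| ≤ |m| := by
      rw [← hkey, abs_mul]
      have h1 : (1:ℤ) ≤ |(n:ℤ)| := by
        rw [abs_of_nonneg (by positivity)]
        exact_mod_cast hn
      nlinarith [abs_nonneg k]
    constructor
    · linarith [neg_abs_le k]
    · linarith [le_abs_self k]
end
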